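/- arXiv:1304.7466 — 2 statements merged into one kernel-verified Lean document; each statement's English description precedes it below -/
import Mathlib

section
/- Let 𝔞 be a 𝒰-graded category and M an 𝔞-bimodule. (1) If 𝒱 ⊆ 𝒰 is a censoring subcategory, i.e. 𝔞_u(A,A') = 0 for every morphism u of 𝒰 not lying in 𝒱, then the restriction φ* : C_𝒰(𝔞, M) → C_𝒱(𝔞^φ, M^φ) along the inclusion φ : 𝒱 ⊆ 𝒰 is an isomorphism of complexes. (2) More generally, if (φ, F) : (𝒱, 𝔟) → (𝒰, 𝔞) is a subcartesian graded functor with 𝒩_1(F) injective which is censoring, in the sense that 𝔞_u(A,A') = 0 for every morphism u : A → A' of 𝒰^♯ not in the image of 𝒩_1(F), then F* : C_𝒰(𝔞, M) → C_𝒱(𝔟, F*M) is an isomorphism of complexes. -/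
/-!
The hypotheses make `𝒩(F)` a bijection from `𝒩(𝔟)` onto a set of simplices of `𝒩(𝔞)`: objects
are detected by their identity 1-simplices, so a simplex of `𝒩(𝔞)` lifts, uniquely, as soon as
each of its arrows does. A multilinear cochain of `𝔞` vanishes off this image. Indeed, if some
arrow `u` of the simplex does not lift then `𝔞_u = 0`, so one tensor factor is zero; and a
0-simplex `A` that does not lift has `𝔞_1(A, A) = 0`, which forces `M(A, -) = 0` because the unit
acts as the identity. Hence `F*` is injective, and its inverse extends a cochain of `𝔟` by zero;
the extension is again multilinear, slot by slot, because `F` is bijective on graded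
`Hom`-modules. That `F*` commutes with the differential is the naturality of the Hochschild
differential. Part (1) is the special case of the projection `δ^{φ,𝔞}` for the inclusion
`φ : 𝒱 ⊆ 𝒰`.
-/

open CategoryTheory

universe u

namespace MapGr

variable (k : Type u) [CommRing k]

/-- A (`k`-linear) map-graded category `(𝒰, 𝔞)`: a set `𝔞_U` of objects over every
`U ∈ 𝒰`, a `k`-module `𝔞_u(B, A)` of morphisms over every `u : U ⟶ U'` in `𝒰`, together
with associative, unital, `k`-bilinear composition maps. -/
structure GradedCat (𝒰 : Type u) [Category.{u} 𝒰] : Type (u + 1) where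
  Obj : 𝒰 → Type u
  Hom : ∀ {X Y : 𝒰}, (X ⟶ Y) → Obj X → Obj Y → ModuleCat.{u} k
  comp : ∀ {X Y Z : 𝒰} {f : Y ⟶ Z} {g : X ⟶ Y} {C : Obj X} {B : Obj Y} {A : Obj Z},
    Hom f B A → Hom g C B → Hom (g ≫ f) C A
  id : ∀ {X : 𝒰} (A : Obj X), Hom (𝟙 X) A A
  comp_add_left : ∀ {X Y Z : 𝒰} {f : Y ⟶ Z} {g : X ⟶ Y} {C : Obj X} {B : Obj Y}
    {A : Obj Z} (x x' : Hom f B A) (y : Hom g C B),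
    comp (x + x') y = comp x y + comp x' y
  comp_add_right : ∀ {X Y Z : 𝒰} {f : Y ⟶ Z} {g : X ⟶ Y} {C : Obj X} {B : Obj Y}
    {A : Obj Z} (x : Hom f B A) (y y' : Hom g C B),
    comp x (y + y') = comp x y + comp x y'
  comp_smul_left : ∀ {X Y Z : 𝒰} {f : Y ⟶ Z} {g : X ⟶ Y} {C : Obj X} {B : Obj Y}
    {A : Obj Z} (r : k) (x : Hom f B A) (y : Hom g C B),
    comp (r • x) y = r • comp x y
  comp_smul_right : ∀ {X Y Z : 𝒰} {f : Y ⟶ Z} {g : X ⟶ Y} {C : Obj X} {B : Obj Y}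
    {A : Obj Z} (r : k) (x : Hom f B A) (y : Hom g C B),
    comp x (r • y) = r • comp x y
  comp_id : ∀ {X Y : 𝒰} {f : X ⟶ Y} {B : Obj X} {A : Obj Y} (x : Hom f B A),
    HEq (comp x (id B)) x
  id_comp : ∀ {X Y : 𝒰} {f : X ⟶ Y} {B : Obj X} {A : Obj Y} (x : Hom f B A),
    HEq (comp (id A) x) x
  assoc : ∀ {W X Y Z : 𝒰} {f : Y ⟶ Z} {g : X ⟶ Y} {h : W ⟶ X} {D : Obj W} {C : Obj X}
    {B : Obj Y} {A : Obj Z} (x : Hom f B A) (y : Hom g C B) (z : Hom h D C),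
    HEq (comp (comp x y) z) (comp x (comp y z))

variable {k}
variable {𝒰 : Type u} [Category.{u} 𝒰]

namespace GradedCat

variable (𝔞 : GradedCat k 𝒰)

/-- Transport of graded morphisms along an equality of underlying morphisms of `𝒰`. -/
def Hcast {X Y : 𝒰} {f g : X ⟶ Y} (h : f = g) {B : 𝔞.Obj X} {A : 𝔞.Obj Y}
    (x : 𝔞.Hom f B A) : 𝔞.Hom g B A :=
  _root_.cast (by rw [h]) x

theorem Hcast_heq {X Y : 𝒰} {f g : X ⟶ Y} (h : f = g) {B : 𝔞.Obj X} {A : 𝔞.Obj Y}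
    (x : 𝔞.Hom f B A) : HEq (𝔞.Hcast h x) x :=
  cast_heq _ _

theorem Hcast_add {X Y : 𝒰} {f g : X ⟶ Y} (h : f = g) {B : 𝔞.Obj X} {A : 𝔞.Obj Y}
    (x y : 𝔞.Hom f B A) : 𝔞.Hcast h (x + y) = 𝔞.Hcast h x + 𝔞.Hcast h y := by
  subst h; rfl

theorem Hcast_smul {X Y : 𝒰} {f g : X ⟶ Y} (h : f = g) {B : 𝔞.Obj X} {A : 𝔞.Obj Y}
    (r : k) (x : 𝔞.Hom f B A) : 𝔞.Hcast h (r • x) = r • 𝔞.Hcast h x := by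
  subst h; rfl

theorem comp_congr {X Y Z : 𝒰} {f f' : Y ⟶ Z} (hf : f = f') {g g' : X ⟶ Y} (hg : g = g')
    {C : 𝔞.Obj X} {B : 𝔞.Obj Y} {A : 𝔞.Obj Z} {x : 𝔞.Hom f B A} {x' : 𝔞.Hom f' B A}
    (hx : HEq x x') {y : 𝔞.Hom g C B} {y' : 𝔞.Hom g' C B} (hy : HEq y y') :
    HEq (𝔞.comp x y) (𝔞.comp x' y') := by
  subst hf; subst hg; rw [eq_of_heq hx, eq_of_heq hy]

end GradedCat

variable {𝒱 : Type u} [Category.{u} 𝒱]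

/-- The `𝒱`-graded category `𝔞^φ` obtained by restricting a `𝒰`-graded category `𝔞`
along a functor `φ : 𝒱 ⥤ 𝒰`:  `(𝔞^φ)_V = 𝔞_{φ V}` and `(𝔞^φ)_v(A, A') = 𝔞_{φ v}(A, A')`. -/
def GradedCat.restrict (φ : 𝒱 ⥤ 𝒰) (𝔞 : GradedCat k 𝒰) : GradedCat k 𝒱 where
  Obj V := 𝔞.Obj (φ.obj V)
  Hom f B A := 𝔞.Hom (φ.map f) B A
  comp x y := 𝔞.Hcast (φ.map_comp _ _).symm (𝔞.comp x y)
  id A := 𝔞.Hcast (φ.map_id _).symm (𝔞.id A)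
  comp_add_left x x' y := by (try dsimp only); rw [𝔞.comp_add_left, 𝔞.Hcast_add]
  comp_add_right x y y' := by (try dsimp only); rw [𝔞.comp_add_right, 𝔞.Hcast_add]
  comp_smul_left r x y := by (try dsimp only); rw [𝔞.comp_smul_left, 𝔞.Hcast_smul]
  comp_smul_right r x y := by (try dsimp only); rw [𝔞.comp_smul_right, 𝔞.Hcast_smul]
  comp_id x :=
    ((𝔞.Hcast_heq _ _).trans
      ((𝔞.comp_congr rfl (φ.map_id _) HEq.rfl (𝔞.Hcast_heq _ _)).trans (𝔞.comp_id _)))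
  id_comp x :=
    ((𝔞.Hcast_heq _ _).trans
      ((𝔞.comp_congr (φ.map_id _) rfl (𝔞.Hcast_heq _ _) HEq.rfl).trans (𝔞.id_comp _)))
  assoc x y z := by
    refine ((𝔞.Hcast_heq _ _).trans ?_).trans (𝔞.Hcast_heq _ _).symm
    refine ((𝔞.comp_congr (φ.map_comp _ _) rfl (𝔞.Hcast_heq _ _) HEq.rfl).trans
      (𝔞.assoc _ _ _)).trans ?_
    exact 𝔞.comp_congr rfl (φ.map_comp _ _).symm HEq.rfl (𝔞.Hcast_heq _ _).symm

variable (k)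

/-- A graded functor `(φ, F) : (𝒱, 𝔟) → (𝒰, 𝔞)` over a functor `φ : 𝒱 ⥤ 𝒰`: maps
`F_V : 𝔟_V → 𝔞_{φ V}` on objects and `k`-linear maps `𝔟_v(B, B') → 𝔞_{φ v}(F B, F B')`
on graded morphisms, preserving composition and identities. -/
structure GradedFunctor (φ : 𝒱 ⥤ 𝒰) (𝔟 : GradedCat k 𝒱) (𝔞 : GradedCat k 𝒰) :
    Type u where
  obj : ∀ {V : 𝒱}, 𝔟.Obj V → 𝔞.Obj (φ.obj V)
  map : ∀ {V V' : 𝒱} (f : V ⟶ V') {B : 𝔟.Obj V} {B' : 𝔟.Obj V'},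
    𝔟.Hom f B B' → 𝔞.Hom (φ.map f) (obj B) (obj B')
  map_add : ∀ {V V' : 𝒱} (f : V ⟶ V') {B : 𝔟.Obj V} {B' : 𝔟.Obj V'}
    (x y : 𝔟.Hom f B B'), map f (x + y) = map f x + map f y
  map_smul : ∀ {V V' : 𝒱} (f : V ⟶ V') {B : 𝔟.Obj V} {B' : 𝔟.Obj V'} (r : k)
    (x : 𝔟.Hom f B B'), map f (r • x) = r • map f x
  map_id : ∀ {V : 𝒱} (B : 𝔟.Obj V), HEq (map (𝟙 V) (𝔟.id B)) (𝔞.id (obj B))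
  map_comp : ∀ {V V' V'' : 𝒱} {f : V' ⟶ V''} {g : V ⟶ V'} {C : 𝔟.Obj V} {B : 𝔟.Obj V'}
    {A : 𝔟.Obj V''} (x : 𝔟.Hom f B A) (y : 𝔟.Hom g C B),
    HEq (map (g ≫ f) (𝔟.comp x y)) (𝔞.comp (map f x) (map g y))

variable {k}

namespace GradedFunctor

variable {φ : 𝒱 ⥤ 𝒰} {𝔟 : GradedCat k 𝒱} {𝔞 : GradedCat k 𝒰}

theorem map_congr (F : GradedFunctor k φ 𝔟 𝔞) {V V' : 𝒱} {f g : V ⟶ V'} (hfg : f = g)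
    {B : 𝔟.Obj V} {B' : 𝔟.Obj V'} {x : 𝔟.Hom f B B'} {y : 𝔟.Hom g B B'} (h : HEq x y) :
    HEq (F.map f x) (F.map g y) := by
  subst hfg; rw [eq_of_heq h]

/-- A graded functor is subcartesian (cartesian with respect to `Map → Mas`) iff all its
maps between graded `Hom`-modules are bijective. -/
def Subcartesian (F : GradedFunctor k φ 𝔟 𝔞) : Prop :=
  ∀ {V V' : 𝒱} (f : V ⟶ V') (B : 𝔟.Obj V) (B' : 𝔟.Obj V'),
    Function.Bijective (fun x : 𝔟.Hom f B B' => F.map f x)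

variable {𝒲 : Type u} [Category.{u} 𝒲] {ψ : 𝒲 ⥤ 𝒱} {𝔠 : GradedCat k 𝒲}

/-- Composition of graded functors. -/
def comp (F : GradedFunctor k φ 𝔟 𝔞) (G : GradedFunctor k ψ 𝔠 𝔟) :
    GradedFunctor k (ψ ⋙ φ) 𝔠 𝔞 where
  obj C := F.obj (G.obj C)
  map := fun {V V'} f {B B'} x => F.map (ψ.map f) (G.map f x)
  map_add := by intro V V' f B B' x y; (try dsimp only); rw [G.map_add, F.map_add]
  map_smul := by intro V V' f B B' r x; (try dsimp only); rw [G.map_smul, F.map_smul]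
  map_id B := (F.map_congr (ψ.map_id _) (G.map_id _)).trans (F.map_id _)
  map_comp x y := (F.map_congr (ψ.map_comp _ _) (G.map_comp _ _)).trans (F.map_comp _ _)

end GradedFunctor

/-- The canonical cartesian graded functor `δ^{φ,𝔞} : (𝒱, 𝔞^φ) → (𝒰, 𝔞)`. -/
def restrictProj (φ : 𝒱 ⥤ 𝒰) (𝔞 : GradedCat k 𝒰) :
    GradedFunctor k φ (𝔞.restrict φ) 𝔞 where
  obj A := A
  map := fun {V V'} _f {B B'} x => x
  map_add := by intros; rfl
  map_smul := by intros; rfl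
  map_id B := 𝔞.Hcast_heq (φ.map_id _).symm (𝔞.id B)
  map_comp x y := 𝔞.Hcast_heq (φ.map_comp _ _).symm (𝔞.comp x y)

theorem restrictProj_subcartesian (φ : 𝒱 ⥤ 𝒰) (𝔞 : GradedCat k 𝒰) :
    (restrictProj φ 𝔞).Subcartesian := by
  intro V V' f B B'
  constructor
  · intro a b h
    exact h
  · intro y
    exact ⟨y, rfl⟩

end MapGr

namespace MapGr

variable {k : Type u} [CommRing k]
variable {𝒰 : Type u} [Category.{u} 𝒰]

/-- The category `𝒰^♯` associated to a `𝒰`-graded category `𝔞`: objects are pairs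
`(U, A)` with `A ∈ 𝔞_U`, and morphisms `(U, A) → (U', A')` are the morphisms `U ⟶ U'`
of `𝒰`. -/
def Sh (𝔞 : GradedCat k 𝒰) : Type u := Σ X : 𝒰, 𝔞.Obj X

instance (𝔞 : GradedCat k 𝒰) : Category.{u} (Sh 𝔞) where
  Hom A B := A.1 ⟶ B.1
  id A := 𝟙 A.1
  comp f g := f ≫ g
  id_comp := by intros; simp
  comp_id := by intros; simp
  assoc := by intros; simp

/-- The underlying morphism of `𝒰` of a morphism of `𝒰^♯`. -/
def Sh.base {𝔞 : GradedCat k 𝒰} {A B : Sh 𝔞} (f : A ⟶ B) : A.1 ⟶ B.1 := f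

@[simp] theorem Sh.base_id {𝔞 : GradedCat k 𝒰} (A : Sh 𝔞) :
    Sh.base (𝟙 A) = 𝟙 A.1 := rfl

@[simp] theorem Sh.base_comp {𝔞 : GradedCat k 𝒰} {A B C : Sh 𝔞} (f : A ⟶ B) (g : B ⟶ C) :
    Sh.base (f ≫ g) = Sh.base f ≫ Sh.base g := rfl

/-- `n`-simplices of the simplicial nerve of a category with specified endpoints:
strings `X = X₀ → X₁ → ⋯ → Xₙ = Y` of `n` composable morphisms. -/
inductive Pth (C : Type u) [Category.{u} C] : ℕ → C → C → Type u
  | nil (X : C) : Pth C 0 X X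
  | cons {n : ℕ} {X Y Z : C} (f : X ⟶ Y) (p : Pth C n Y Z) : Pth C (n + 1) X Z

/-- The composite `|u| = uₙ₋₁ ⋯ u₁ u₀` of a string of composable morphisms. -/
def Pth.comp {C : Type u} [Category.{u} C] : ∀ {n : ℕ} {X Y : C}, Pth C n X Y → (X ⟶ Y)
  | _, _, _, .nil X => 𝟙 X
  | _, _, _, .cons f p => f ≫ p.comp

@[simp] theorem Pth.comp_nil {C : Type u} [Category.{u} C] (X : C) :
    (Pth.nil X).comp = 𝟙 X := rfl

@[simp] theorem Pth.comp_cons {C : Type u} [Category.{u} C] {n : ℕ} {X Y Z : C}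
    (f : X ⟶ Y) (p : Pth C n Y Z) : (Pth.cons f p).comp = f ≫ p.comp := rfl

/-- The map induced by a functor on simplices of the nerves. -/
def Pth.map {C D : Type u} [Category.{u} C] [Category.{u} D] (F : C ⥤ D) :
    ∀ {n : ℕ} {X Y : C}, Pth C n X Y → Pth D n (F.obj X) (F.obj Y)
  | _, _, _, .nil X => .nil _
  | _, _, _, .cons f p => .cons (F.map f) (p.map F)

theorem Pth.comp_map {C D : Type u} [Category.{u} C] [Category.{u} D] (F : C ⥤ D)
    {n : ℕ} {X Y : C} (p : Pth C n X Y) : (p.map F).comp = F.map p.comp := by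
  induction p with
  | nil => simp [Pth.map]
  | cons f p ih => simp [Pth.map, ih]

/-- The set of `n`-simplices of the nerve `𝒩(𝔞) = 𝒩(𝒰^♯)` of a graded category. -/
def NerveTot (C : Type u) [Category.{u} C] (m : ℕ) : Type u :=
  Σ (X : C) (Y : C), Pth C m X Y

/-- The map induced by a functor on the set of `n`-simplices of the nerves. -/
def NerveTot.map {C D : Type u} [Category.{u} C] [Category.{u} D] (F : C ⥤ D) {m : ℕ}
    (s : NerveTot C m) : NerveTot D m :=
  ⟨F.obj s.1, F.obj s.2.1, Pth.map F s.2.2⟩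

/-- A family of elements of the graded `Hom`-modules of `𝔞` lying over a simplex of the
nerve of `𝔞`. -/
inductive PthElts {k : Type u} [CommRing k] {𝒰 : Type u} [Category.{u} 𝒰]
    (𝔞 : GradedCat k 𝒰) : ∀ {n : ℕ} {X Y : Sh 𝔞}, Pth (Sh 𝔞) n X Y → Type u
  | nil (X : Sh 𝔞) : PthElts 𝔞 (Pth.nil X)
  | cons {n : ℕ} {X Y Z : Sh 𝔞} {f : X ⟶ Y} {p : Pth (Sh 𝔞) n Y Z}
      (x : 𝔞.Hom (Sh.base f) X.2 Y.2) (e : PthElts 𝔞 p) : PthElts 𝔞 (Pth.cons f p)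

variable (k)

/-- An `𝔞`-bimodule `M`: `k`-modules `M_u(B, A)` together with associative, unital,
`k`-bilinear left and right actions of `𝔞`. -/
structure Bimod {𝒰 : Type u} [Category.{u} 𝒰] (𝔞 : GradedCat k 𝒰) : Type (u + 1) where
  M : ∀ {X Y : 𝒰}, (X ⟶ Y) → 𝔞.Obj X → 𝔞.Obj Y → ModuleCat.{u} k
  actL : ∀ {X Y Z : 𝒰} {f : Y ⟶ Z} {g : X ⟶ Y} {B : 𝔞.Obj X} {A : 𝔞.Obj Y}
    {A' : 𝔞.Obj Z}, 𝔞.Hom f A A' → M g B A → M (g ≫ f) B A'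
  actR : ∀ {X Y Z : 𝒰} {f : Y ⟶ Z} {g : X ⟶ Y} {B' : 𝔞.Obj X} {B : 𝔞.Obj Y}
    {A : 𝔞.Obj Z}, M f B A → 𝔞.Hom g B' B → M (g ≫ f) B' A
  actL_add_left : ∀ {X Y Z : 𝒰} {f : Y ⟶ Z} {g : X ⟶ Y} {B : 𝔞.Obj X} {A : 𝔞.Obj Y}
    {A' : 𝔞.Obj Z} (x x' : 𝔞.Hom f A A') (m : M g B A),
    actL (x + x') m = actL x m + actL x' m
  actL_add_right : ∀ {X Y Z : 𝒰} {f : Y ⟶ Z} {g : X ⟶ Y} {B : 𝔞.Obj X} {A : 𝔞.Obj Y}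
    {A' : 𝔞.Obj Z} (x : 𝔞.Hom f A A') (m m' : M g B A),
    actL x (m + m') = actL x m + actL x m'
  actL_smul_left : ∀ {X Y Z : 𝒰} {f : Y ⟶ Z} {g : X ⟶ Y} {B : 𝔞.Obj X} {A : 𝔞.Obj Y}
    {A' : 𝔞.Obj Z} (r : k) (x : 𝔞.Hom f A A') (m : M g B A),
    actL (r • x) m = r • actL x m
  actL_smul_right : ∀ {X Y Z : 𝒰} {f : Y ⟶ Z} {g : X ⟶ Y} {B : 𝔞.Obj X} {A : 𝔞.Obj Y}
    {A' : 𝔞.Obj Z} (r : k) (x : 𝔞.Hom f A A') (m : M g B A),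
    actL x (r • m) = r • actL x m
  actR_add_left : ∀ {X Y Z : 𝒰} {f : Y ⟶ Z} {g : X ⟶ Y} {B' : 𝔞.Obj X} {B : 𝔞.Obj Y}
    {A : 𝔞.Obj Z} (m m' : M f B A) (y : 𝔞.Hom g B' B),
    actR (m + m') y = actR m y + actR m' y
  actR_add_right : ∀ {X Y Z : 𝒰} {f : Y ⟶ Z} {g : X ⟶ Y} {B' : 𝔞.Obj X} {B : 𝔞.Obj Y}
    {A : 𝔞.Obj Z} (m : M f B A) (y y' : 𝔞.Hom g B' B),
    actR m (y + y') = actR m y + actR m y'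
  actR_smul_left : ∀ {X Y Z : 𝒰} {f : Y ⟶ Z} {g : X ⟶ Y} {B' : 𝔞.Obj X} {B : 𝔞.Obj Y}
    {A : 𝔞.Obj Z} (r : k) (m : M f B A) (y : 𝔞.Hom g B' B),
    actR (r • m) y = r • actR m y
  actR_smul_right : ∀ {X Y Z : 𝒰} {f : Y ⟶ Z} {g : X ⟶ Y} {B' : 𝔞.Obj X} {B : 𝔞.Obj Y}
    {A : 𝔞.Obj Z} (r : k) (m : M f B A) (y : 𝔞.Hom g B' B),
    actR m (r • y) = r • actR m y
  actL_id : ∀ {X Y : 𝒰} {g : X ⟶ Y} {B : 𝔞.Obj X} {A : 𝔞.Obj Y} (m : M g B A),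
    HEq (actL (𝔞.id A) m) m
  actR_id : ∀ {X Y : 𝒰} {f : X ⟶ Y} {B : 𝔞.Obj X} {A : 𝔞.Obj Y} (m : M f B A),
    HEq (actR m (𝔞.id B)) m
  actL_actL : ∀ {W X Y Z : 𝒰} {f' : Y ⟶ Z} {f : X ⟶ Y} {g : W ⟶ X} {B : 𝔞.Obj W}
    {A : 𝔞.Obj X} {A' : 𝔞.Obj Y} {A'' : 𝔞.Obj Z} (x : 𝔞.Hom f' A' A'')
    (y : 𝔞.Hom f A A') (m : M g B A),
    HEq (actL x (actL y m)) (actL (𝔞.comp x y) m)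
  actR_actR : ∀ {W X Y Z : 𝒰} {f : Y ⟶ Z} {g : X ⟶ Y} {h : W ⟶ X} {B'' : 𝔞.Obj W}
    {B' : 𝔞.Obj X} {B : 𝔞.Obj Y} {A : 𝔞.Obj Z} (m : M f B A) (y : 𝔞.Hom g B' B)
    (y' : 𝔞.Hom h B'' B'),
    HEq (actR (actR m y) y') (actR m (𝔞.comp y y'))
  actL_actR : ∀ {W X Y Z : 𝒰} {f : Y ⟶ Z} {g : X ⟶ Y} {h : W ⟶ X} {B' : 𝔞.Obj W}
    {B : 𝔞.Obj X} {A : 𝔞.Obj Y} {A' : 𝔞.Obj Z} (x : 𝔞.Hom f A A') (m : M g B A)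
    (y : 𝔞.Hom h B' B),
    HEq (actL x (actR m y)) (actR (actL x m) y)

variable {k}

namespace Bimod

variable {𝔞 : GradedCat k 𝒰} (M : Bimod k 𝔞)

/-- Transport of bimodule elements along an equality of underlying morphisms of `𝒰`. -/
def cst {X Y : 𝒰} {f g : X ⟶ Y} (h : f = g) {B : 𝔞.Obj X} {A : 𝔞.Obj Y}
    (m : M.M f B A) : M.M g B A :=
  _root_.cast (by rw [h]) m

theorem cst_heq {X Y : 𝒰} {f g : X ⟶ Y} (h : f = g) {B : 𝔞.Obj X} {A : 𝔞.Obj Y}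
    (m : M.M f B A) : HEq (M.cst h m) m :=
  cast_heq _ _

theorem cst_add {X Y : 𝒰} {f g : X ⟶ Y} (h : f = g) {B : 𝔞.Obj X} {A : 𝔞.Obj Y}
    (m m' : M.M f B A) : M.cst h (m + m') = M.cst h m + M.cst h m' := by
  subst h; rfl

theorem cst_smul {X Y : 𝒰} {f g : X ⟶ Y} (h : f = g) {B : 𝔞.Obj X} {A : 𝔞.Obj Y}
    (r : k) (m : M.M f B A) : M.cst h (r • m) = r • M.cst h m := by
  subst h; rfl

theorem actL_congr {X Y Z : 𝒰} {f f' : Y ⟶ Z} (hf : f = f') {g g' : X ⟶ Y}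
    (hg : g = g') {B : 𝔞.Obj X} {A : 𝔞.Obj Y} {A' : 𝔞.Obj Z} {x : 𝔞.Hom f A A'}
    {x' : 𝔞.Hom f' A A'} (hx : HEq x x') {m : M.M g B A} {m' : M.M g' B A}
    (hm : HEq m m') : HEq (M.actL x m) (M.actL x' m') := by
  subst hf; subst hg; rw [eq_of_heq hx, eq_of_heq hm]

theorem actR_congr {X Y Z : 𝒰} {f f' : Y ⟶ Z} (hf : f = f') {g g' : X ⟶ Y}
    (hg : g = g') {B' : 𝔞.Obj X} {B : 𝔞.Obj Y} {A : 𝔞.Obj Z} {m : M.M f B A}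
    {m' : M.M f' B A} (hm : HEq m m') {y : 𝔞.Hom g B' B} {y' : 𝔞.Hom g' B' B}
    (hy : HEq y y') : HEq (M.actR m y) (M.actR m' y') := by
  subst hf; subst hg; rw [eq_of_heq hm, eq_of_heq hy]

end Bimod

/-- The identity bimodule `1_𝔞`. -/
def GradedCat.unit (𝔞 : GradedCat k 𝒰) : Bimod k 𝔞 where
  M := 𝔞.Hom
  actL := 𝔞.comp
  actR := 𝔞.comp
  actL_add_left := 𝔞.comp_add_left
  actL_add_right := 𝔞.comp_add_right
  actL_smul_left := 𝔞.comp_smul_left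
  actL_smul_right := 𝔞.comp_smul_right
  actR_add_left := 𝔞.comp_add_left
  actR_add_right := 𝔞.comp_add_right
  actR_smul_left := 𝔞.comp_smul_left
  actR_smul_right := 𝔞.comp_smul_right
  actL_id := 𝔞.id_comp
  actR_id := 𝔞.comp_id
  actL_actL x y m := (𝔞.assoc x y m).symm
  actR_actR m y y' := 𝔞.assoc m y y'
  actL_actR x m y := (𝔞.assoc x m y).symm

variable {𝒱 : Type u} [Category.{u} 𝒱]

/-- The pullback `F*M` of an `𝔞`-bimodule along a graded functor
`(φ, F) : (𝒱, 𝔟) → (𝒰, 𝔞)`: `(F*M)_v(B, B') = M_{φ v}(F B, F B')`. -/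
def Bimod.pullback {φ : 𝒱 ⥤ 𝒰} {𝔟 : GradedCat k 𝒱} {𝔞 : GradedCat k 𝒰}
    (F : GradedFunctor k φ 𝔟 𝔞) (M : Bimod k 𝔞) : Bimod k 𝔟 where
  M f B B' := M.M (φ.map f) (F.obj B) (F.obj B')
  actL := fun {X Y Z f g B A A'} x m =>
    M.cst (φ.map_comp g f).symm (M.actL (F.map f x) m)
  actR := fun {X Y Z f g B' B A} m y =>
    M.cst (φ.map_comp g f).symm (M.actR m (F.map g y))
  actL_add_left := by
    intros; (try dsimp only); rw [F.map_add, M.actL_add_left, M.cst_add]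
  actL_add_right := by
    intros; (try dsimp only); rw [M.actL_add_right, M.cst_add]
  actL_smul_left := by
    intros; (try dsimp only); rw [F.map_smul, M.actL_smul_left, M.cst_smul]
  actL_smul_right := by
    intros; (try dsimp only); rw [M.actL_smul_right, M.cst_smul]
  actR_add_left := by
    intros; (try dsimp only); rw [M.actR_add_left, M.cst_add]
  actR_add_right := by
    intros; (try dsimp only); rw [F.map_add, M.actR_add_right, M.cst_add]
  actR_smul_left := by
    intros; (try dsimp only); rw [M.actR_smul_left, M.cst_smul]
  actR_smul_right := by
    intros; (try dsimp only); rw [F.map_smul, M.actR_smul_right, M.cst_smul]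
  actL_id := by
    intro X Y g B A m; (try dsimp only)
    exact (M.cst_heq _ _).trans
      ((M.actL_congr (φ.map_id _) rfl (F.map_id _) HEq.rfl).trans (M.actL_id m))
  actR_id := by
    intro X Y f B A m; (try dsimp only)
    exact (M.cst_heq _ _).trans
      ((M.actR_congr rfl (φ.map_id _) HEq.rfl (F.map_id _)).trans (M.actR_id m))
  actL_actL := by
    intro W X Y Z f' f g B A A' A'' x y m; (try dsimp only)
    refine ((M.cst_heq _ _).trans ?_).trans (M.cst_heq _ _).symm
    refine ((M.actL_congr rfl (φ.map_comp _ _) HEq.rfl (M.cst_heq _ _)).trans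
      (M.actL_actL _ _ _)).trans ?_
    exact M.actL_congr (φ.map_comp _ _).symm rfl (F.map_comp _ _).symm HEq.rfl
  actR_actR := by
    intro W X Y Z f g h B'' B' B A m y y'; (try dsimp only)
    refine ((M.cst_heq _ _).trans ?_).trans (M.cst_heq _ _).symm
    refine ((M.actR_congr (φ.map_comp _ _) rfl (M.cst_heq _ _) HEq.rfl).trans
      (M.actR_actR _ _ _)).trans ?_
    exact M.actR_congr rfl (φ.map_comp _ _).symm HEq.rfl (F.map_comp _ _).symm
  actL_actR := by
    intro W X Y Z f g h B' B A A' x m y; (try dsimp only)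
    refine ((M.cst_heq _ _).trans ?_).trans (M.cst_heq _ _).symm
    refine ((M.actL_congr rfl (φ.map_comp _ _) HEq.rfl (M.cst_heq _ _)).trans
      (M.actL_actR _ _ _)).trans ?_
    exact M.actR_congr (φ.map_comp _ _).symm rfl (M.cst_heq _ _).symm HEq.rfl

/-- The functor `𝒱^♯ ⥤ 𝒰^♯` induced by a graded functor. -/
def sharpF {φ : 𝒱 ⥤ 𝒰} {𝔟 : GradedCat k 𝒱} {𝔞 : GradedCat k 𝒰}
    (F : GradedFunctor k φ 𝔟 𝔞) : Sh 𝔟 ⥤ Sh 𝔞 where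
  obj X := ⟨φ.obj X.1, F.obj X.2⟩
  map {X Y} f := φ.map (Sh.base f)
  map_id X := φ.map_id X.1
  map_comp f g := φ.map_comp _ _

/-- The map induced by a graded functor on families of elements over simplices. -/
def eltsMap {φ : 𝒱 ⥤ 𝒰} {𝔟 : GradedCat k 𝒱} {𝔞 : GradedCat k 𝒰}
    (F : GradedFunctor k φ 𝔟 𝔞) :
    ∀ {n : ℕ} {X Y : Sh 𝔟} {p : Pth (Sh 𝔟) n X Y},
      PthElts 𝔟 p → PthElts 𝔞 (p.map (sharpF F))
  | _, _, _, _, .nil X => .nil _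
  | _, _, _, _, .cons x e => .cons (F.map _ x) (eltsMap F e)

/-- The module of raw Hochschild `n`-cochains of `(𝒰, 𝔞)` with values in an
`𝔞`-bimodule `M`: families, indexed by the `n`-simplices `(u, A)` of `𝒩(𝔞)`, of maps
`𝔞_{u_{n-1}} ⊗ ⋯ ⊗ 𝔞_{u_0} → M_{|u|}(A₀, Aₙ)` (multilinearity is the separate
predicate `IsCochain`). -/
abbrev RawCochain {𝔞 : GradedCat k 𝒰} (M : Bimod k 𝔞) (n : ℕ) : Type u :=
  ∀ (X Y : Sh 𝔞) (p : Pth (Sh 𝔞) n X Y), PthElts 𝔞 p → M.M (Sh.base p.comp) X.2 Y.2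

/-- Restriction of Hochschild cochains along a graded functor, with values in the
pullback bimodule: `(F*ψ)_{(v,B)} = ψ_{(φ v, F B)} ∘ F^{⊗n}`. -/
def Fstar {φ : 𝒱 ⥤ 𝒰} {𝔟 : GradedCat k 𝒱} {𝔞 : GradedCat k 𝒰}
    (F : GradedFunctor k φ 𝔟 𝔞) (M : Bimod k 𝔞) {n : ℕ} (c : RawCochain M n) :
    RawCochain (Bimod.pullback F M) n :=
  fun X Y p e =>
    M.cst (by rw [Pth.comp_map]; rfl) (c _ _ (p.map (sharpF F)) (eltsMap F e))

/-- Restriction of Hochschild cochains (with values in the identity bimodules) along a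
subcartesian graded functor: `(F*ψ)_{(v,B)} = F⁻¹ ∘ ψ_{(φ v, F B)} ∘ F^{⊗n}`. -/
noncomputable def FstarUnit {φ : 𝒱 ⥤ 𝒰} {𝔟 : GradedCat k 𝒱} {𝔞 : GradedCat k 𝒰}
    (F : GradedFunctor k φ 𝔟 𝔞) (hF : F.Subcartesian) {n : ℕ}
    (c : RawCochain 𝔞.unit n) : RawCochain 𝔟.unit n :=
  fun X Y p e =>
    (Equiv.ofBijective _ (hF (Sh.base p.comp) X.2 Y.2)).symm
      ((𝔞.unit).cst (by rw [Pth.comp_map]; rfl) (c _ _ (p.map (sharpF F)) (eltsMap F e)))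

section Multilinear

variable {𝔞 : GradedCat k 𝒰} (M : Bimod k 𝔞)

/-- The multilinearity predicate for (relative) Hochschild cochains: additivity and
`k`-homogeneity in the first slot, and, recursively, multilinearity of all partial
evaluations. -/
def IsML : ∀ {n : ℕ} {W : 𝒰} {B : 𝔞.Obj W} {Y : Sh 𝔞} {v : W ⟶ Y.1},
    (∀ (Z : Sh 𝔞) (q : Pth (Sh 𝔞) n Y Z), PthElts 𝔞 q →
      M.M (v ≫ Sh.base q.comp) B Z.2) → Prop
  | 0, _, _, _, _, _ => True
  | n + 1, W, B, Y, v, c =>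
      (∀ (Y' Z : Sh 𝔞) (a : Y ⟶ Y') (q : Pth (Sh 𝔞) n Y' Z) (e : PthElts 𝔞 q)
        (x x' : 𝔞.Hom (Sh.base a) Y.2 Y'.2),
        c Z (.cons a q) (.cons (x + x') e) =
          c Z (.cons a q) (.cons x e) + c Z (.cons a q) (.cons x' e)) ∧
      (∀ (Y' Z : Sh 𝔞) (a : Y ⟶ Y') (q : Pth (Sh 𝔞) n Y' Z) (e : PthElts 𝔞 q) (r : k)
        (x : 𝔞.Hom (Sh.base a) Y.2 Y'.2),
        c Z (.cons a q) (.cons (r • x) e) = r • c Z (.cons a q) (.cons x e)) ∧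
      (∀ (Y' : Sh 𝔞) (a : Y ⟶ Y') (x : 𝔞.Hom (Sh.base a) Y.2 Y'.2),
        IsML (v := v ≫ Sh.base a)
          (fun Z q e => M.cst (by simp) (c Z (.cons a q) (.cons x e))))

/-- A raw cochain, viewed as a relative cochain. -/
def toRel {n : ℕ} (c : RawCochain M n) (X : Sh 𝔞) :
    ∀ (Z : Sh 𝔞) (q : Pth (Sh 𝔞) n X Z), PthElts 𝔞 q →
      M.M (𝟙 X.1 ≫ Sh.base q.comp) X.2 Z.2 :=
  fun Z q e => M.cst (by simp) (c X Z q e)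

/-- A raw cochain is a genuine Hochschild cochain if it is multilinear. -/
def IsCochain {n : ℕ} (c : RawCochain M n) : Prop :=
  ∀ X : Sh 𝔞, IsML M (toRel M c X)

end Multilinear

section Differential

variable {𝔞 : GradedCat k 𝒰}

/-- The inductive core of the Hochschild differential: `χ` is the relative cochain with
the already-consumed prefix applied, and `G` records the evaluation with the last
morphism of the prefix composed into the first remaining slot (initially, the right
action on the source). -/
def hochD (M : Bimod k 𝔞) {W : 𝒰} (B : 𝔞.Obj W) :
    ∀ {m : ℕ} {Y Z : Sh 𝔞} (v : W ⟶ Y.1)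
      (χ : ∀ (Z' : Sh 𝔞) (q : Pth (Sh 𝔞) m Y Z'), PthElts 𝔞 q →
        M.M (v ≫ Sh.base q.comp) B Z'.2)
      (G : ∀ (Y' Z' : Sh 𝔞) (c : Y ⟶ Y') (z : 𝔞.Hom (Sh.base c) Y.2 Y'.2)
        (q : Pth (Sh 𝔞) m Y' Z'), PthElts 𝔞 q →
        M.M (v ≫ (Sh.base c ≫ Sh.base q.comp)) B Z'.2)
      (p : Pth (Sh 𝔞) (m + 1) Y Z) (e : PthElts 𝔞 p),
      M.M (v ≫ Sh.base p.comp) B Z.2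
  | 0, Y, Z, v, χ, G, .cons a (.nil _), .cons x e' =>
      G _ _ a x (.nil _) e' - M.cst (by simp) (M.actL x (χ _ (.nil _) (.nil _)))
  | m + 1, Y, Z, v, χ, G, .cons a q, .cons x e' =>
      G _ _ a x q e' -
        M.cst (by simp)
          (hochD M B (v ≫ Sh.base a)
            (fun Z' r er => M.cst (by simp) (χ Z' (.cons a r) (.cons x er)))
            (fun Y'' Z' c z r er =>
              M.cst (by simp) (χ Z' (.cons (a ≫ c) r) (.cons (𝔞.comp z x) er)))
            q e')

/-- The simplicial Hochschild differential on raw cochains. -/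
def dRaw (M : Bimod k 𝔞) {n : ℕ} (c : RawCochain M n) : RawCochain M (n + 1) :=
  fun X Z p e =>
    M.cst (by simp)
      (hochD M X.2 (𝟙 X.1)
        (fun Z' q eq => M.cst (by simp) (c X Z' q eq))
        (fun Y' Z' a z q eq => M.cst (by simp) (M.actR (c Y' Z' q eq) z))
        p e)

end Differential

end MapGr

namespace MapGr

variable {k : Type u} [CommRing k]
variable {𝒰 : Type u} [Category.{u} 𝒰]

/-- A subcategory of `𝒰`: a class of objects and a class of morphisms, closed under
identities and composition. -/
structure Subcat (𝒰 : Type u) [Category.{u} 𝒰] where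
  objs : 𝒰 → Prop
  homs : ∀ {X Y : 𝒰}, (X ⟶ Y) → Prop
  dom_mem : ∀ {X Y : 𝒰} (f : X ⟶ Y), homs f → objs X
  cod_mem : ∀ {X Y : 𝒰} (f : X ⟶ Y), homs f → objs Y
  id_mem : ∀ X : 𝒰, objs X → homs (𝟙 X)
  comp_mem : ∀ {X Y Z : 𝒰} (f : X ⟶ Y) (g : Y ⟶ Z), homs f → homs g → homs (f ≫ g)

/-- The category carried by a subcategory. -/
def Subcat.Cat (𝒮 : Subcat 𝒰) : Type u := { X : 𝒰 // 𝒮.objs X }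

instance (𝒮 : Subcat 𝒰) : Category.{u} 𝒮.Cat where
  Hom A B := { f : A.1 ⟶ B.1 // 𝒮.homs f }
  id A := ⟨𝟙 A.1, 𝒮.id_mem A.1 A.2⟩
  comp f g := ⟨f.1 ≫ g.1, 𝒮.comp_mem _ _ f.2 g.2⟩
  id_comp f := by apply Subtype.ext; simp
  comp_id f := by apply Subtype.ext; simp
  assoc f g h := by apply Subtype.ext; simp

/-- The inclusion functor of a subcategory. -/
def Subcat.incl (𝒮 : Subcat 𝒰) : 𝒮.Cat ⥤ 𝒰 where
  obj A := A.1
  map f := f.1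
  map_id _ := rfl
  map_comp _ _ := rfl

/-- The intersection `𝒱₁ ∩ 𝒱₂` of two subcategories. -/
def Subcat.inter (𝒮 𝒯 : Subcat 𝒰) : Subcat 𝒰 where
  objs X := 𝒮.objs X ∧ 𝒯.objs X
  homs f := 𝒮.homs f ∧ 𝒯.homs f
  dom_mem f h := ⟨𝒮.dom_mem f h.1, 𝒯.dom_mem f h.2⟩
  cod_mem f h := ⟨𝒮.cod_mem f h.1, 𝒯.cod_mem f h.2⟩
  id_mem X h := ⟨𝒮.id_mem X h.1, 𝒯.id_mem X h.2⟩
  comp_mem f g h h' := ⟨𝒮.comp_mem f g h.1 h'.1, 𝒯.comp_mem f g h.2 h'.2⟩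

/-- The inclusion `𝒱₁ ∩ 𝒱₂ ⊆ 𝒱₁`. -/
def Subcat.interFst (𝒮 𝒯 : Subcat 𝒰) : (𝒮.inter 𝒯).Cat ⥤ 𝒮.Cat where
  obj A := ⟨A.1, A.2.1⟩
  map f := ⟨f.1, f.2.1⟩
  map_id _ := rfl
  map_comp _ _ := rfl

/-- The inclusion `𝒱₁ ∩ 𝒱₂ ⊆ 𝒱₂`. -/
def Subcat.interSnd (𝒮 𝒯 : Subcat 𝒰) : (𝒮.inter 𝒯).Cat ⥤ 𝒯.Cat where
  obj A := ⟨A.1, A.2.2⟩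
  map f := ⟨f.1, f.2.2⟩
  map_id _ := rfl
  map_comp _ _ := rfl

/-- The canonical (cartesian) graded functor
`(𝒱₁ ∩ 𝒱₂, 𝔞^φ) → (𝒱₁, 𝔞^{φ₁})` over the inclusion `𝒱₁ ∩ 𝒱₂ ⊆ 𝒱₁`. -/
def interRes₁ (𝒮 𝒯 : Subcat 𝒰) (𝔞 : GradedCat k 𝒰) :
    GradedFunctor k (Subcat.interFst 𝒮 𝒯) (𝔞.restrict (𝒮.inter 𝒯).incl)
      (𝔞.restrict 𝒮.incl) where
  obj {V} B := B
  map := fun {V V'} _f {B B'} x => x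
  map_add := by intros; rfl
  map_smul := by intros; rfl
  map_id := by
    intro V B
    exact (𝔞.Hcast_heq ((𝒮.inter 𝒯).incl.map_id V).symm (𝔞.id B)).trans
      (𝔞.Hcast_heq (𝒮.incl.map_id ((Subcat.interFst 𝒮 𝒯).obj V)).symm (𝔞.id B)).symm
  map_comp := by
    intro V V' V'' f g C B A x y
    exact (𝔞.Hcast_heq ((𝒮.inter 𝒯).incl.map_comp g f).symm (𝔞.comp x y)).trans
      (𝔞.Hcast_heq (𝒮.incl.map_comp ((Subcat.interFst 𝒮 𝒯).map g)
        ((Subcat.interFst 𝒮 𝒯).map f)).symm (𝔞.comp x y)).symm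

/-- The canonical (cartesian) graded functor
`(𝒱₁ ∩ 𝒱₂, 𝔞^φ) → (𝒱₂, 𝔞^{φ₂})` over the inclusion `𝒱₁ ∩ 𝒱₂ ⊆ 𝒱₂`. -/
def interRes₂ (𝒮 𝒯 : Subcat 𝒰) (𝔞 : GradedCat k 𝒰) :
    GradedFunctor k (Subcat.interSnd 𝒮 𝒯) (𝔞.restrict (𝒮.inter 𝒯).incl)
      (𝔞.restrict 𝒯.incl) where
  obj {V} B := B
  map := fun {V V'} _f {B B'} x => x
  map_add := by intros; rfl
  map_smul := by intros; rfl
  map_id := by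
    intro V B
    exact (𝔞.Hcast_heq ((𝒮.inter 𝒯).incl.map_id V).symm (𝔞.id B)).trans
      (𝔞.Hcast_heq (𝒯.incl.map_id ((Subcat.interSnd 𝒮 𝒯).obj V)).symm (𝔞.id B)).symm
  map_comp := by
    intro V V' V'' f g C B A x y
    exact (𝔞.Hcast_heq ((𝒮.inter 𝒯).incl.map_comp g f).symm (𝔞.comp x y)).trans
      (𝔞.Hcast_heq (𝒯.incl.map_comp ((Subcat.interSnd 𝒮 𝒯).map g)
        ((Subcat.interSnd 𝒮 𝒯).map f)).symm (𝔞.comp x y)).symm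

theorem interRes₁_subcartesian (𝒮 𝒯 : Subcat 𝒰) (𝔞 : GradedCat k 𝒰) :
    (interRes₁ 𝒮 𝒯 𝔞).Subcartesian := by
  intro V V' f B B'
  exact ⟨fun a b h => h, fun y => ⟨y, rfl⟩⟩

theorem interRes₂_subcartesian (𝒮 𝒯 : Subcat 𝒰) (𝔞 : GradedCat k 𝒰) :
    (interRes₂ 𝒮 𝒯 𝔞).Subcartesian := by
  intro V V' f B B'
  exact ⟨fun a b h => h, fun y => ⟨y, rfl⟩⟩

end MapGr

namespace MapGr

variable {k : Type u} [CommRing k] {𝒰 : Type u} [Category.{u} 𝒰]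

namespace Bimod

variable {𝔞 : GradedCat k 𝒰} (M : Bimod k 𝔞)

theorem cst_zero {X Y : 𝒰} {f g : X ⟶ Y} (h : f = g) {B : 𝔞.Obj X} {A : 𝔞.Obj Y} :
    M.cst h (0 : M.M f B A) = 0 := by
  subst h; rfl

theorem cst_injective {X Y : 𝒰} {f g : X ⟶ Y} (h : f = g) {B : 𝔞.Obj X} {A : 𝔞.Obj Y} :
    Function.Injective (M.cst h : M.M f B A → M.M g B A) := by
  subst h; exact fun _ _ => id

theorem cst_eq_zero_iff {X Y : 𝒰} {f g : X ⟶ Y} (h : f = g) {B : 𝔞.Obj X} {A : 𝔞.Obj Y}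
    {m : M.M f B A} : M.cst h m = 0 ↔ m = 0 := by
  subst h; rfl

theorem eq_cst_of_heq {X Y : 𝒰} {f g : X ⟶ Y} (h : g = f) {B : 𝔞.Obj X} {A : 𝔞.Obj Y}
    {m : M.M f B A} {m' : M.M g B A} (hm : HEq m m') : m = M.cst h m' :=
  eq_of_heq (hm.trans (M.cst_heq h m').symm)

theorem sub_congr {X Y : 𝒰} {f f' : X ⟶ Y} (h : f = f') {B : 𝔞.Obj X} {A : 𝔞.Obj Y}
    {m m' : M.M f B A} {n n' : M.M f' B A} (hm : HEq m n) (hn : HEq m' n') :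
    HEq (m - m') (n - n') := by
  subst h; rw [eq_of_heq hm, eq_of_heq hn]

theorem eq_zero_of_subsingleton_source {X Y : 𝒰} {B : 𝔞.Obj X}
    [Subsingleton (𝔞.Hom (𝟙 X) B B)] {g : X ⟶ Y} {A : 𝔞.Obj Y} (m : M.M g B A) : m = 0 := by
  have hid : 𝔞.id B = (0 : k) • 𝔞.id B := Subsingleton.elim _ _
  have hzero : M.actR m (𝔞.id B) = 0 := by rw [hid, M.actR_smul_right, zero_smul]
  refine eq_of_heq ((M.actR_id m).symm.trans ?_)
  rw [hzero, ← M.cst_zero (Category.id_comp g)]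
  exact (M.cst_heq _ _).symm

theorem eq_zero_of_subsingleton_target {X Y : 𝒰} {A : 𝔞.Obj Y}
    [Subsingleton (𝔞.Hom (𝟙 Y) A A)] {g : X ⟶ Y} {B : 𝔞.Obj X} (m : M.M g B A) : m = 0 := by
  have hid : 𝔞.id A = (0 : k) • 𝔞.id A := Subsingleton.elim _ _
  have hzero : M.actL (𝔞.id A) m = 0 := by rw [hid, M.actL_smul_left, zero_smul]
  refine eq_of_heq ((M.actL_id m).symm.trans ?_)
  rw [hzero, ← M.cst_zero (Category.comp_id g)]
  exact (M.cst_heq _ _).symm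

end Bimod

section Vanishing

variable {𝔞 : GradedCat k 𝒰} (M : Bimod k 𝔞)

def PthElts.HasZero : ∀ {n : ℕ} {X Y : Sh 𝔞} {p : Pth (Sh 𝔞) n X Y}, PthElts 𝔞 p → Prop
  | _, _, _, _, .nil _ => False
  | _, _, _, _, .cons x e => x = 0 ∨ HasZero e

theorem IsML.eq_zero_of_hasZero {n : ℕ} {W : 𝒰} {B : 𝔞.Obj W} {Y : Sh 𝔞} {v : W ⟶ Y.1}
    {χ : ∀ (Z : Sh 𝔞) (q : Pth (Sh 𝔞) n Y Z), PthElts 𝔞 q → M.M (v ≫ Sh.base q.comp) B Z.2}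
    (hχ : IsML M χ) {Z : Sh 𝔞} (q : Pth (Sh 𝔞) n Y Z) (e : PthElts 𝔞 q) (hz : e.HasZero) :
    χ Z q e = 0 := by
  induction e generalizing W with
  | nil => exact hz.elim
  | @cons n X' Y' Z' f p x e ih =>
    rcases hz with rfl | hz
    · have h := hχ.2.1 _ _ f p e (0 : k) 0
      rwa [zero_smul, zero_smul] at h
    · exact (M.cst_eq_zero_iff _).1 (ih (hχ.2.2 _ f x) hz)

theorem isML_of_forall_eq_zero {n : ℕ} {W : 𝒰} {B : 𝔞.Obj W} {Y : Sh 𝔞} {v : W ⟶ Y.1}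
    (χ : ∀ (Z : Sh 𝔞) (q : Pth (Sh 𝔞) n Y Z), PthElts 𝔞 q → M.M (v ≫ Sh.base q.comp) B Z.2)
    (h : ∀ Z q e, χ Z q e = 0) : IsML M χ := by
  induction n generalizing Y v with
  | zero => trivial
  | succ n ih =>
    refine ⟨fun _ _ _ _ _ _ _ => by simp only [h, add_zero],
      fun _ _ _ _ _ _ _ => by simp only [h, smul_zero], fun _ _ _ => ih _ fun _ _ _ => ?_⟩
    rw [h]
    exact M.cst_zero _

end Vanishing

theorem NerveTot.mk_inj {C : Type u} [Category.{u} C] {n : ℕ} {X X' Y Y' : C}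
    {p : Pth C n X Y} {p' : Pth C n X' Y'}
    (h : (⟨X, Y, p⟩ : NerveTot C n) = ⟨X', Y', p'⟩) :
    ∃ _ : X = X', ∃ _ : Y = Y', HEq p p' := by
  obtain ⟨rfl, h⟩ := Sigma.mk.inj_iff.mp h
  obtain ⟨rfl, h⟩ := Sigma.mk.inj_iff.mp (eq_of_heq h)
  exact ⟨rfl, rfl, h⟩

section Lifting

variable {𝒱 : Type u} [Category.{u} 𝒱] {φ : 𝒱 ⥤ 𝒰} {𝔟 : GradedCat k 𝒱}
  {𝔞 : GradedCat k 𝒰} {F : GradedFunctor k φ 𝔟 𝔞}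

namespace GradedFunctor

variable (F)

def NerveOneInjective : Prop :=
  Function.Injective (fun s : NerveTot (Sh 𝔟) 1 => NerveTot.map (sharpF F) s)

def Censoring : Prop :=
  ∀ (X Y : Sh 𝔞) (u : X ⟶ Y),
    ⟨X, Y, Pth.cons u (Pth.nil Y)⟩ ∉ Set.range (NerveTot.map (sharpF F) (m := 1)) →
      Subsingleton (𝔞.Hom (Sh.base u) X.2 Y.2)

end GradedFunctor

theorem eltsMap_bijective (hF : F.Subcartesian) {n : ℕ} {X Y : Sh 𝔟}
    (q : Pth (Sh 𝔟) n X Y) : Function.Bijective (eltsMap F (p := q)) := by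
  induction q with
  | nil X =>
    refine ⟨fun e e' _ => ?_, fun e => ⟨.nil X, ?_⟩⟩
    · cases e; cases e'; rfl
    · cases e; rfl
  | cons v q ih =>
    refine ⟨fun e e' h => ?_, fun e => ?_⟩
    · cases e with | cons x e => ?_
      cases e' with | cons x' e' => ?_
      injection h with _ _ _ _ _ _ hx he
      rw [(hF _ _ _).1 hx, ih.1 he]
    · cases e with | cons x e => ?_
      obtain ⟨y, rfl⟩ := (hF _ _ _).2 x
      obtain ⟨e', rfl⟩ := ih.2 e
      exact ⟨.cons y e', rfl⟩

@[elab_as_elim]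
theorem mem_range_rec {n : ℕ} {motive : ∀ {X Y : Sh 𝔞}, Pth (Sh 𝔞) n X Y → Prop}
    (H : ∀ {X' Y' : Sh 𝔟} (q : Pth (Sh 𝔟) n X' Y'), motive (q.map (sharpF F)))
    {X Y : Sh 𝔞} {p : Pth (Sh 𝔞) n X Y}
    (h : ⟨X, Y, p⟩ ∈ Set.range (NerveTot.map (sharpF F))) : motive p := by
  obtain ⟨⟨X', Y', q⟩, hs⟩ := h
  obtain ⟨rfl, rfl, hp⟩ := NerveTot.mk_inj hs
  cases eq_of_heq hp
  exact H q

theorem cons_mem_range_head {n : ℕ} {X Ymid Z : Sh 𝔞} {a : X ⟶ Ymid}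
    {q : Pth (Sh 𝔞) n Ymid Z} (h : ⟨X, Z, .cons a q⟩ ∈ Set.range (NerveTot.map (sharpF F))) :
    ⟨X, Ymid, .cons a (.nil Ymid)⟩ ∈ Set.range (NerveTot.map (sharpF F)) := by
  obtain ⟨⟨A, Z', q₂⟩, hs⟩ := h
  cases q₂ with
  | cons w r =>
    obtain ⟨rfl, rfl, hp⟩ := NerveTot.mk_inj hs
    obtain ⟨rfl, hw, -⟩ := Pth.cons.inj (eq_of_heq hp)
    cases eq_of_heq hw
    exact ⟨⟨_, _, .cons w (.nil _)⟩, rfl⟩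

theorem cons_mem_range_tail {n : ℕ} {X Ymid Z : Sh 𝔞} {a : X ⟶ Ymid}
    {q : Pth (Sh 𝔞) n Ymid Z} (h : ⟨X, Z, .cons a q⟩ ∈ Set.range (NerveTot.map (sharpF F))) :
    ⟨Ymid, Z, q⟩ ∈ Set.range (NerveTot.map (sharpF F)) := by
  obtain ⟨⟨A, Z', q₂⟩, hs⟩ := h
  cases q₂ with
  | cons w r =>
    obtain ⟨rfl, rfl, hp⟩ := NerveTot.mk_inj hs
    obtain ⟨rfl, -, hr⟩ := Pth.cons.inj (eq_of_heq hp)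
    cases eq_of_heq hr
    exact ⟨⟨_, _, r⟩, rfl⟩

section NerveOneInjective

variable (hinj : F.NerveOneInjective)
include hinj

theorem GradedFunctor.NerveOneInjective.obj_injective : Function.Injective (sharpF F).obj := by
  intro A A' h
  have hid : ∀ B : Sh 𝔟, NerveTot.map (sharpF F) ⟨B, B, .cons (𝟙 B) (.nil B)⟩ =
      ⟨(sharpF F).obj B, (sharpF F).obj B, .cons (𝟙 _) (.nil _)⟩ := fun B => by
    simp only [NerveTot.map, Pth.map]; rw [(sharpF F).map_id]
  have := @hinj ⟨A, A, .cons (𝟙 A) (.nil A)⟩ ⟨A', A', .cons (𝟙 A') (.nil A')⟩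
    (by simp only [hid]; rw [h])
  exact congrArg Sigma.fst this

theorem GradedFunctor.NerveOneInjective.map_injective {A A' : Sh 𝔟} :
    Function.Injective ((sharpF F).map : (A ⟶ A') → _) := by
  intro v v' h
  have := @hinj ⟨A, A', .cons v (.nil A')⟩ ⟨A, A', .cons v' (.nil A')⟩
    (by simp only [NerveTot.map, Pth.map]; rw [h])
  obtain ⟨-, -, hp⟩ := NerveTot.mk_inj this
  obtain ⟨-, hv, -⟩ := Pth.cons.inj (eq_of_heq hp)
  exact eq_of_heq hv

theorem GradedFunctor.NerveOneInjective.nerveTot_map_injective (n : ℕ) :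
    Function.Injective (NerveTot.map (sharpF F) (m := n)) := by
  induction n with
  | zero =>
    rintro ⟨X, _, ⟨⟩⟩ ⟨X', _, ⟨⟩⟩ h
    obtain ⟨hX, -, -⟩ := NerveTot.mk_inj h
    cases hinj.obj_injective hX
    rfl
  | succ n ih =>
    rintro ⟨X, Y, p⟩ ⟨X', Y', p'⟩ h
    cases p with | cons v r => ?_
    cases p' with | cons v' r' => ?_
    obtain ⟨hX, hY, hp⟩ := NerveTot.mk_inj h
    cases hinj.obj_injective hX
    cases hinj.obj_injective hY
    obtain ⟨hB, hv, hr⟩ := Pth.cons.inj (eq_of_heq hp)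
    cases hinj.obj_injective hB
    cases hinj.map_injective (eq_of_heq hv)
    obtain ⟨-, -, hr⟩ := NerveTot.mk_inj
      (@ih ⟨_, _, r⟩ ⟨_, _, r'⟩ (by simp only [NerveTot.map]; rw [eq_of_heq hr]))
    cases eq_of_heq hr
    rfl

@[elab_as_elim]
theorem cons_mem_range_rec {n : ℕ} {Y' : Sh 𝔟}
    {motive : ∀ {Ymid Z : Sh 𝔞}, ((sharpF F).obj Y' ⟶ Ymid) → Pth (Sh 𝔞) n Ymid Z → Prop}
    (H : ∀ {B' Z' : Sh 𝔟} (v : Y' ⟶ B') (r : Pth (Sh 𝔟) n B' Z'),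
      motive ((sharpF F).map v) (r.map (sharpF F)))
    {Ymid Z : Sh 𝔞} {a : (sharpF F).obj Y' ⟶ Ymid} {q : Pth (Sh 𝔞) n Ymid Z}
    (h : ⟨(sharpF F).obj Y', Z, .cons a q⟩ ∈ Set.range (NerveTot.map (sharpF F))) :
    motive a q := by
  obtain ⟨⟨A, Z', p⟩, hs⟩ := h
  cases p with | cons w r => ?_
  obtain ⟨hA, rfl, hp⟩ := NerveTot.mk_inj hs
  cases hinj.obj_injective hA
  obtain ⟨rfl, hw, hr⟩ := Pth.cons.inj (eq_of_heq hp)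
  cases eq_of_heq hw
  cases eq_of_heq hr
  exact H w r

theorem cons_mem_range {n : ℕ} {X Ymid Z : Sh 𝔞} {u : X ⟶ Ymid} {p : Pth (Sh 𝔞) n Ymid Z}
    (hu : ⟨X, Ymid, .cons u (.nil Ymid)⟩ ∈ Set.range (NerveTot.map (sharpF F)))
    (hp : ⟨Ymid, Z, p⟩ ∈ Set.range (NerveTot.map (sharpF F))) :
    ⟨X, Z, .cons u p⟩ ∈ Set.range (NerveTot.map (sharpF F)) := by
  obtain ⟨⟨A, B, p₁⟩, hs⟩ := hu
  cases p₁ with | cons v r => ?_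
  cases r
  obtain ⟨rfl, rfl, hv⟩ := NerveTot.mk_inj hs
  obtain ⟨-, hv, -⟩ := Pth.cons.inj (eq_of_heq hv)
  cases eq_of_heq hv
  obtain ⟨⟨B', Z', r⟩, hs'⟩ := hp
  obtain ⟨hB, rfl, hr⟩ := NerveTot.mk_inj hs'
  cases hinj.obj_injective hB
  cases eq_of_heq hr
  exact ⟨⟨A, Z', .cons v r⟩, rfl⟩

theorem mem_range_or_hasZero_or_subsingleton (hcens : F.Censoring) {n : ℕ} {X Y : Sh 𝔞}
    {p : Pth (Sh 𝔞) n X Y} (e : PthElts 𝔞 p) :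
    ⟨X, Y, p⟩ ∈ Set.range (NerveTot.map (sharpF F)) ∨ e.HasZero ∨
      Subsingleton (𝔞.Hom (𝟙 X.1) X.2 X.2) := by
  induction e with
  | nil X =>
    by_cases hid : ⟨X, X, .cons (𝟙 X) (.nil X)⟩ ∈ Set.range (NerveTot.map (sharpF F))
    · obtain ⟨s, hs⟩ := hid
      obtain ⟨rfl, -, -⟩ := NerveTot.mk_inj hs
      exact Or.inl ⟨⟨s.1, s.1, .nil _⟩, rfl⟩
    · exact Or.inr (Or.inr (hcens X X (𝟙 X) hid))
  | @cons n X Ymid Z u p x e ih =>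
    by_cases hu : ⟨X, Ymid, .cons u (.nil Ymid)⟩ ∈ Set.range (NerveTot.map (sharpF F))
    · rcases ih with hp | hz | hsub
      · exact Or.inl (cons_mem_range hinj hu hp)
      · exact Or.inr (Or.inl (Or.inr hz))
      · exact Or.inr (Or.inl (Or.inl (𝔞.unit.eq_zero_of_subsingleton_target x)))
    · have := hcens X Ymid u hu
      exact Or.inr (Or.inl (Or.inl (Subsingleton.elim _ _)))

end NerveOneInjective

theorem base_comp_map_sharpF {n : ℕ} {X Y : Sh 𝔟} (q : Pth (Sh 𝔟) n X Y) :
    Sh.base (q.map (sharpF F)).comp = φ.map (Sh.base q.comp) := by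
  rw [Pth.comp_map]; rfl

section Transfer

variable (hF : F.Subcartesian) (hinj : F.NerveOneInjective) {M : Bimod k 𝔞}
include hF hinj

theorem isML_succ_of_pullback {n : ℕ} {W : 𝒱} {B : 𝔟.Obj W} {Y' : Sh 𝔟} {v : W ⟶ Y'.1}
    {vh : φ.obj W ⟶ ((sharpF F).obj Y').1} (hv : vh = φ.map v)
    {χ : ∀ (Z : Sh 𝔞) (q : Pth (Sh 𝔞) (n + 1) ((sharpF F).obj Y') Z), PthElts 𝔞 q →
      M.M (vh ≫ Sh.base q.comp) (F.obj B) Z.2}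
    {χ' : ∀ (Z' : Sh 𝔟) (q' : Pth (Sh 𝔟) (n + 1) Y' Z'), PthElts 𝔟 q' →
      (Bimod.pullback F M).M (v ≫ Sh.base q'.comp) B Z'.2}
    (hχ' : IsML (Bimod.pullback F M) χ')
    (hχ : ∀ Z' q' e', HEq (χ ((sharpF F).obj Z') (q'.map (sharpF F)) (eltsMap F e'))
      (χ' Z' q' e'))
    (hzero : ∀ Z q e,
      ⟨(sharpF F).obj Y', Z, q⟩ ∉ Set.range (NerveTot.map (sharpF F)) → χ Z q e = 0)
    (hrec : ∀ (Ymid : Sh 𝔞) (a : (sharpF F).obj Y' ⟶ Ymid) (x : 𝔞.Hom (Sh.base a) _ Ymid.2),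
      IsML (v := vh ≫ Sh.base a) M
        (fun Z q e => M.cst (by simp) (χ Z (.cons a q) (.cons x e)))) :
    IsML M χ := by
  have key : ∀ {B' Z' : Sh 𝔟} (w : Y' ⟶ B') (r : Pth (Sh 𝔟) n B' Z') y e',
      χ _ (.cons ((sharpF F).map w) (r.map (sharpF F))) (.cons (F.map _ y) (eltsMap F e')) =
        M.cst (by
          rw [hv, φ.map_comp]; exact congrArg (φ.map v ≫ ·) (base_comp_map_sharpF (.cons w r)).symm)
          (χ' Z' (.cons w r) (.cons y e')) :=
    fun w r y e' => M.eq_cst_of_heq _ (hχ _ (.cons w r) (.cons y e'))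
  refine ⟨fun Ymid Z a q e x x' => ?_, fun Ymid Z a q e c x => ?_, hrec⟩
  · by_cases hlift : ⟨(sharpF F).obj Y', Z, .cons a q⟩ ∈ Set.range (NerveTot.map (sharpF F))
    · revert e x x'
      refine cons_mem_range_rec hinj (fun w r e x x' => ?_) hlift
      obtain ⟨y, rfl⟩ := (hF _ _ _).2 x
      obtain ⟨y', rfl⟩ := (hF _ _ _).2 x'
      obtain ⟨e', rfl⟩ := (eltsMap_bijective hF r).2 e
      dsimp only
      erw [← F.map_add]
      rw [key, key, key, hχ'.1]
      exact M.cst_add _ _ _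
    · simp only [hzero _ _ _ hlift, add_zero]
  · by_cases hlift : ⟨(sharpF F).obj Y', Z, .cons a q⟩ ∈ Set.range (NerveTot.map (sharpF F))
    · revert e x
      refine cons_mem_range_rec hinj (fun w r e x => ?_) hlift
      obtain ⟨y, rfl⟩ := (hF _ _ _).2 x
      obtain ⟨e', rfl⟩ := (eltsMap_bijective hF r).2 e
      dsimp only
      erw [← F.map_smul]
      rw [key, key, hχ'.2.1]
      exact M.cst_smul _ _ _
    · simp only [hzero _ _ _ hlift, smul_zero]

theorem isML_of_pullback {n : ℕ} {W : 𝒱} {B : 𝔟.Obj W} {Y' : Sh 𝔟} {v : W ⟶ Y'.1}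
    {vh : φ.obj W ⟶ ((sharpF F).obj Y').1} (hv : vh = φ.map v)
    {χ : ∀ (Z : Sh 𝔞) (q : Pth (Sh 𝔞) n ((sharpF F).obj Y') Z), PthElts 𝔞 q →
      M.M (vh ≫ Sh.base q.comp) (F.obj B) Z.2}
    {χ' : ∀ (Z' : Sh 𝔟) (q' : Pth (Sh 𝔟) n Y' Z'), PthElts 𝔟 q' →
      (Bimod.pullback F M).M (v ≫ Sh.base q'.comp) B Z'.2}
    (hχ' : IsML (Bimod.pullback F M) χ')
    (hχ : ∀ Z' q' e', HEq (χ ((sharpF F).obj Z') (q'.map (sharpF F)) (eltsMap F e'))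
      (χ' Z' q' e'))
    (hzero : ∀ Z q e,
      ⟨(sharpF F).obj Y', Z, q⟩ ∉ Set.range (NerveTot.map (sharpF F)) → χ Z q e = 0) :
    IsML M χ := by
  induction n generalizing Y' v vh with
  | zero => trivial
  | succ n ih =>
    refine isML_succ_of_pullback hF hinj hv hχ' hχ hzero fun Ymid a x => ?_
    by_cases ha : ⟨(sharpF F).obj Y', Ymid, .cons a (.nil Ymid)⟩ ∈
        Set.range (NerveTot.map (sharpF F))
    · revert x
      refine cons_mem_range_rec hinj (motive := fun {Ymid _} a _ =>
        ∀ x : 𝔞.Hom (Sh.base a) _ Ymid.2, IsML (v := vh ≫ Sh.base a) M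
          (fun Z q e => M.cst (by simp) (χ Z (.cons a q) (.cons x e)))) (fun w _ x => ?_) ha
      obtain ⟨y, rfl⟩ := (hF _ _ _).2 x
      refine ih (v := v ≫ Sh.base w) (by rw [hv]; exact (φ.map_comp _ _).symm)
        (hχ'.2.2 _ w y) (fun Z' q' e' => ?_) (fun Z q e hq => ?_)
      · exact (M.cst_heq _ _).trans ((hχ _ (.cons w q') (.cons y e')).trans
          ((Bimod.pullback F M).cst_heq _ _).symm)
      · rw [hzero _ _ _ (fun h => hq (cons_mem_range_tail h))]
        exact M.cst_zero _
    · refine isML_of_forall_eq_zero M _ fun Z q e => ?_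
      rw [hzero _ _ _ (fun h => ha (cons_mem_range_head h))]
      exact M.cst_zero _

end Transfer

section LiftCochain

variable (M : Bimod k 𝔞) (hF : F.Subcartesian)

noncomputable def liftValue {n : ℕ} (c' : RawCochain (Bimod.pullback F M) n) :
    ∀ (s : NerveTot (Sh 𝔟) n) {t : NerveTot (Sh 𝔞) n}, NerveTot.map (sharpF F) s = t →
      PthElts 𝔞 t.2.2 → M.M (Sh.base t.2.2.comp) t.1.2 t.2.1.2
  | ⟨X', Y', q⟩, _, rfl, e =>
    M.cst (base_comp_map_sharpF q).symm
      (c' X' Y' q ((Equiv.ofBijective _ (eltsMap_bijective hF q)).symm e))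

open scoped Classical in
noncomputable def liftCochain {n : ℕ} (c' : RawCochain (Bimod.pullback F M) n) :
    RawCochain M n := fun X Y p e =>
  if h : ⟨X, Y, p⟩ ∈ Set.range (NerveTot.map (sharpF F)) then
    liftValue M hF c' h.choose h.choose_spec e
  else 0

variable {M hF}

theorem liftCochain_map (hinj : F.NerveOneInjective) {n : ℕ}
    (c' : RawCochain (Bimod.pullback F M) n) {X' Y' : Sh 𝔟} (q : Pth (Sh 𝔟) n X' Y')
    (e' : PthElts 𝔟 q) :
    HEq (liftCochain M hF c' _ _ (q.map (sharpF F)) (eltsMap F e')) (c' X' Y' q e') := by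
  have key : ∀ s (hs : NerveTot.map (sharpF F) s = ⟨_, _, q.map (sharpF F)⟩),
      HEq (liftValue M hF c' s hs (eltsMap F e')) (c' X' Y' q e') := by
    intro s hs
    cases hinj.nerveTot_map_injective n (a₂ := ⟨X', Y', q⟩) hs
    refine (M.cst_heq (base_comp_map_sharpF q).symm _).trans ?_
    rw [Equiv.ofBijective_symm_apply_apply]
    exact HEq.rfl
  have hmem : ⟨_, _, q.map (sharpF F)⟩ ∈ Set.range (NerveTot.map (sharpF F)) :=
    ⟨⟨X', Y', q⟩, rfl⟩
  unfold liftCochain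
  rw [dif_pos hmem]
  exact key _ _

theorem liftCochain_of_not_mem {n : ℕ} (c' : RawCochain (Bimod.pullback F M) n)
    {X Y : Sh 𝔞} {p : Pth (Sh 𝔞) n X Y} (e : PthElts 𝔞 p)
    (h : ⟨X, Y, p⟩ ∉ Set.range (NerveTot.map (sharpF F))) :
    liftCochain M hF c' X Y p e = 0 := by
  unfold liftCochain
  rw [dif_neg h]

theorem fstar_liftCochain (hinj : F.NerveOneInjective) {n : ℕ}
    (c' : RawCochain (Bimod.pullback F M) n) : Fstar F M (liftCochain M hF c') = c' := by
  funext X' Y' q e'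
  exact eq_of_heq ((M.cst_heq _ _).trans (liftCochain_map hinj c' q e'))

theorem liftCochain_isCochain (hinj : F.NerveOneInjective) (hcens : F.Censoring) {n : ℕ}
    {c' : RawCochain (Bimod.pullback F M) n} (hc' : IsCochain (Bimod.pullback F M) c') :
    IsCochain M (liftCochain M hF c') := by
  intro X
  by_cases hid : ⟨X, X, .cons (𝟙 X) (.nil X)⟩ ∈ Set.range (NerveTot.map (sharpF F))
  · obtain ⟨s, hs⟩ := hid
    obtain ⟨rfl, -, -⟩ := NerveTot.mk_inj hs
    refine isML_of_pullback hF hinj (φ.map_id _).symm (hc' s.1) (fun Z' q' e' => ?_)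
      (fun Z q e hq => ?_)
    · exact (M.cst_heq _ _).trans ((liftCochain_map hinj c' q' e').trans
        ((Bimod.pullback F M).cst_heq _ _).symm)
    · exact (M.cst_eq_zero_iff _).2 (liftCochain_of_not_mem c' e hq)
  · have : Subsingleton (𝔞.Hom (𝟙 X.1) X.2 X.2) := hcens X X (𝟙 X) hid
    exact isML_of_forall_eq_zero M _ fun _ _ _ => M.eq_zero_of_subsingleton_source _

end LiftCochain

theorem fstar_injective (hF : F.Subcartesian) (hinj : F.NerveOneInjective)
    (hcens : F.Censoring) {M : Bimod k 𝔞} {n : ℕ} {c c' : RawCochain M n}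
    (hc : IsCochain M c) (hc' : IsCochain M c') (h : Fstar F M c = Fstar F M c') : c = c' := by
  funext X Y p e
  rcases mem_range_or_hasZero_or_subsingleton hinj hcens e with hp | hz | hsub
  · revert e
    refine mem_range_rec (fun q e => ?_) hp
    obtain ⟨e', rfl⟩ := (eltsMap_bijective hF q).2 e
    exact M.cst_injective _ (congrFun (congrFun (congrFun (congrFun h _) _) q) e')
  · rw [(M.cst_eq_zero_iff _).1 ((hc X).eq_zero_of_hasZero M p e hz),
      (M.cst_eq_zero_iff _).1 ((hc' X).eq_zero_of_hasZero M p e hz)]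
  · rw [M.eq_zero_of_subsingleton_source (c X Y p e),
      M.eq_zero_of_subsingleton_source (c' X Y p e)]

section Differential

variable (M : Bimod k 𝔞)

theorem pullback_actL_heq {X Y Z : 𝒱} {f : Y ⟶ Z} {g : X ⟶ Y} {B : 𝔟.Obj X}
    {A : 𝔟.Obj Y} {A' : 𝔟.Obj Z} (x : 𝔟.Hom f A A') (m : (Bimod.pullback F M).M g B A) :
    HEq ((Bimod.pullback F M).actL x m) (M.actL (F.map f x) m) :=
  M.cst_heq (φ.map_comp g f).symm _

theorem pullback_actR_heq {X Y Z : 𝒱} {f : Y ⟶ Z} {g : X ⟶ Y} {B' : 𝔟.Obj X}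
    {B : 𝔟.Obj Y} {A : 𝔟.Obj Z} (m : (Bimod.pullback F M).M f B A) (y : 𝔟.Hom g B' B) :
    HEq ((Bimod.pullback F M).actR m y) (M.actR m (F.map g y)) :=
  M.cst_heq (φ.map_comp g f).symm _

theorem PthElts.cons_congr {n : ℕ} {X Y Z : Sh 𝔞} {f f' : X ⟶ Y} (hf : f = f')
    {p : Pth (Sh 𝔞) n Y Z} {x : 𝔞.Hom (Sh.base f) X.2 Y.2}
    {x' : 𝔞.Hom (Sh.base f') X.2 Y.2} (hx : HEq x x') (e : PthElts 𝔞 p) :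
    HEq (PthElts.cons (f := f) x e) (PthElts.cons (f := f') x' e) := by
  subst hf; rw [eq_of_heq hx]

theorem hochD_pullback {m : ℕ} {W : 𝒱} (B : 𝔟.Obj W) {Y Z : Sh 𝔟} (v : W ⟶ Y.1)
    (vh : φ.obj W ⟶ ((sharpF F).obj Y).1) (hv : vh = φ.map v)
    (χ : ∀ (Z' : Sh 𝔟) (q : Pth (Sh 𝔟) m Y Z'), PthElts 𝔟 q →
      (Bimod.pullback F M).M (v ≫ Sh.base q.comp) B Z'.2)
    (χh : ∀ (Z' : Sh 𝔞) (q : Pth (Sh 𝔞) m ((sharpF F).obj Y) Z'),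
      PthElts 𝔞 q → M.M (vh ≫ Sh.base q.comp) (F.obj B) Z'.2)
    (G : ∀ (Y' Z' : Sh 𝔟) (c : Y ⟶ Y') (_ : 𝔟.Hom (Sh.base c) Y.2 Y'.2)
      (q : Pth (Sh 𝔟) m Y' Z'), PthElts 𝔟 q →
      (Bimod.pullback F M).M (v ≫ (Sh.base c ≫ Sh.base q.comp)) B Z'.2)
    (Gh : ∀ (Y' Z' : Sh 𝔞) (c : (sharpF F).obj Y ⟶ Y')
      (_ : 𝔞.Hom (Sh.base c) ((sharpF F).obj Y).2 Y'.2)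
      (q : Pth (Sh 𝔞) m Y' Z'), PthElts 𝔞 q →
      M.M (vh ≫ (Sh.base c ≫ Sh.base q.comp)) (F.obj B) Z'.2)
    (hχ : ∀ Z' q e, HEq (χ Z' q e) (χh _ (q.map (sharpF F)) (eltsMap F e)))
    (hG : ∀ Y' Z' c z q e, HEq (G Y' Z' c z q e)
      (Gh _ _ ((sharpF F).map c) (F.map (Sh.base c) z) (q.map (sharpF F)) (eltsMap F e)))
    (p : Pth (Sh 𝔟) (m + 1) Y Z) (e : PthElts 𝔟 p) :
    HEq (hochD (Bimod.pullback F M) B v χ G p e)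
      (hochD M (F.obj B) vh χh Gh (p.map (sharpF F)) (eltsMap F e)) := by
  induction m generalizing Y v vh with
  | zero =>
    cases e with | @cons _ _ _ _ a _ x e' => ?_
    cases e'
    refine Bimod.sub_congr M
      (by simp only [Pth.comp_nil, Sh.base_id, Category.comp_id, Functor.map_comp, hv]; rfl)
      (hG _ _ a x _ _) ?_
    refine (((Bimod.pullback F M).cst_heq _ _).trans ((pullback_actL_heq M x _).trans ?_)).trans
      (M.cst_heq _ _).symm
    refine M.actL_congr rfl ?_ HEq.rfl (hχ _ _ _)
    simp only [Pth.comp_nil, Sh.base_id, Category.comp_id, hv]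
    exact (Category.comp_id _).symm
  | succ m ih =>
    cases e with | @cons _ _ _ _ a q x e' => ?_
    refine Bimod.sub_congr M (by simp only [Functor.map_comp, hv, Pth.comp_map]; rfl)
      (hG _ _ a x q e') ?_
    refine (((Bimod.pullback F M).cst_heq _ _).trans ?_).trans (M.cst_heq _ _).symm
    refine ih (v ≫ Sh.base a) (vh ≫ Sh.base ((sharpF F).map a))
      (by rw [hv]; exact (φ.map_comp _ _).symm) _ _ _ _ (fun Z₂ r er => ?_)
      (fun Y₂ Z₂ c z r er => ?_) q e'
    · exact (((Bimod.pullback F M).cst_heq _ _).trans (hχ _ (.cons a r) (.cons x er))).trans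
        (M.cst_heq _ _).symm
    · refine (((Bimod.pullback F M).cst_heq _ _).trans
        ((hχ _ (.cons (a ≫ c) r) (.cons (𝔟.comp z x) er)).trans ?_)).trans (M.cst_heq _ _).symm
      have hc := (sharpF F).map_comp a c
      congr 1
      · exact congrArg (Pth.cons · _) hc
      · exact PthElts.cons_congr hc (F.map_comp z x) _

theorem fstar_dRaw {n : ℕ} (c : RawCochain M n) :
    Fstar F M (dRaw M c) = dRaw (Bimod.pullback F M) (Fstar F M c) := by
  funext X Z p e
  refine eq_of_heq (((M.cst_heq _ _).trans ((M.cst_heq _ _).trans ?_)).trans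
    ((Bimod.pullback F M).cst_heq _ _).symm)
  refine (hochD_pullback M X.2 (𝟙 X.1) (𝟙 (φ.obj X.1)) (φ.map_id _).symm _ _ _ _
    (fun _ _ _ => ?_) (fun _ _ a z q e => ?_) p e).symm
  · exact ((Bimod.pullback F M).cst_heq _ _).trans ((M.cst_heq _ _).trans (M.cst_heq _ _).symm)
  · refine (((Bimod.pullback F M).cst_heq _ _).trans
      ((pullback_actR_heq M _ z).trans ?_)).trans (M.cst_heq _ _).symm
    exact M.actR_congr (base_comp_map_sharpF q).symm rfl (M.cst_heq _ _) HEq.rfl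

end Differential

def IsCochainIso (F : GradedFunctor k φ 𝔟 𝔞) (M : Bimod k 𝔞) : Prop :=
  ∀ n : ℕ,
    (∀ c c' : RawCochain M n, IsCochain M c → IsCochain M c' →
      Fstar F M c = Fstar F M c' → c = c') ∧
    (∀ c' : RawCochain (Bimod.pullback F M) n, IsCochain (Bimod.pullback F M) c' →
      ∃ c : RawCochain M n, IsCochain M c ∧ Fstar F M c = c') ∧
    (∀ c : RawCochain M n, Fstar F M (dRaw M c) = dRaw (Bimod.pullback F M) (Fstar F M c))

theorem isCochainIso_fstar (M : Bimod k 𝔞) (hF : F.Subcartesian) (hinj : F.NerveOneInjective)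
    (hcens : F.Censoring) : IsCochainIso F M := fun _ =>
  ⟨fun _ _ hc hc' h => fstar_injective hF hinj hcens hc hc' h,
    fun c' hc' => ⟨liftCochain M hF c', liftCochain_isCochain hinj hcens hc',
      fstar_liftCochain hinj c'⟩,
    fstar_dRaw M⟩

end Lifting

section Restriction

variable {𝔞 : GradedCat k 𝒰} (𝒮 : Subcat 𝒰)

theorem restrictProj_sharpF_obj_injective :
    Function.Injective (sharpF (restrictProj 𝒮.incl 𝔞)).obj := by
  rintro ⟨⟨V, hV⟩, A⟩ ⟨⟨V', hV'⟩, A'⟩ h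
  obtain ⟨rfl, h⟩ := Sigma.mk.inj_iff.mp h
  cases eq_of_heq h
  rfl

theorem restrictProj_nerveOneInjective : (restrictProj 𝒮.incl 𝔞).NerveOneInjective := by
  rintro ⟨X, Y, p⟩ ⟨X', Y', p'⟩ h
  cases p with | cons v r => ?_
  cases p' with | cons v' r' => ?_
  cases r
  cases r'
  obtain ⟨hX, hY, hp⟩ := NerveTot.mk_inj h
  cases restrictProj_sharpF_obj_injective 𝒮 hX
  cases restrictProj_sharpF_obj_injective 𝒮 hY
  obtain ⟨-, hv, -⟩ := Pth.cons.inj (eq_of_heq hp)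
  cases Subtype.ext (eq_of_heq hv)
  rfl

theorem restrictProj_censoring
    (hS : ∀ {X Y : 𝒰} (u : X ⟶ Y), ¬ 𝒮.homs u →
      ∀ (A : 𝔞.Obj X) (A' : 𝔞.Obj Y), Subsingleton (𝔞.Hom u A A')) :
    (restrictProj 𝒮.incl 𝔞).Censoring := by
  intro X Y u hu
  refine hS (Sh.base u) (fun hmem => hu ?_) X.2 Y.2
  exact ⟨⟨⟨⟨X.1, 𝒮.dom_mem _ hmem⟩, X.2⟩, ⟨⟨Y.1, 𝒮.cod_mem _ hmem⟩, Y.2⟩,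
    .cons (⟨Sh.base u, hmem⟩ : { f : X.1 ⟶ Y.1 // 𝒮.homs f }) (.nil _)⟩, rfl⟩

end Restriction

/-- Let `𝔞` be a `𝒰`-graded category and `M` an `𝔞`-bimodule.
(1) If `𝒱 ⊆ 𝒰` is a censoring subcategory (`𝔞_u(A, A') = 0` for every morphism `u` of
`𝒰` not lying in `𝒱`), then `φ* : C_𝒰(𝔞, M) → C_𝒱(𝔞^φ, M^φ)` is an isomorphism of
complexes.
(2) If `(φ, F) : (𝒱, 𝔟) → (𝒰, 𝔞)` is a subcartesian graded functor with `𝒩₁(F)`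
injective which is censoring (`𝔞_u(A, A') = 0` for every morphism `u : A → A'` of `𝒰^♯`
not in the image of `𝒩₁(F)`), then `F* : C_𝒰(𝔞, M) → C_𝒱(𝔟, F*M)` is an isomorphism of
complexes. -/
theorem statement17 (𝔞 : GradedCat k 𝒰) (M : Bimod k 𝔞) :
    -- (1): censoring subcategories
    (∀ 𝒮 : Subcat 𝒰,
      (∀ {X Y : 𝒰} (u : X ⟶ Y), ¬ 𝒮.homs u →
        ∀ (A : 𝔞.Obj X) (A' : 𝔞.Obj Y), Subsingleton (𝔞.Hom u A A')) →
      ∀ n : ℕ,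
        (∀ c c' : RawCochain M n, IsCochain M c → IsCochain M c' →
          Fstar (restrictProj 𝒮.incl 𝔞) M c = Fstar (restrictProj 𝒮.incl 𝔞) M c' →
          c = c') ∧
        (∀ c' : RawCochain (Bimod.pullback (restrictProj 𝒮.incl 𝔞) M) n,
          IsCochain (Bimod.pullback (restrictProj 𝒮.incl 𝔞) M) c' →
          ∃ c : RawCochain M n, IsCochain M c ∧
            Fstar (restrictProj 𝒮.incl 𝔞) M c = c') ∧
        (∀ c : RawCochain M n,
          Fstar (restrictProj 𝒮.incl 𝔞) M (dRaw M c) =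
            dRaw (Bimod.pullback (restrictProj 𝒮.incl 𝔞) M)
              (Fstar (restrictProj 𝒮.incl 𝔞) M c))) ∧
    -- (2): censoring subcartesian 1-injections
    (∀ (𝒱 : Type u) (_ : Category.{u} 𝒱) (φ : 𝒱 ⥤ 𝒰) (𝔟 : GradedCat k 𝒱)
      (F : GradedFunctor k φ 𝔟 𝔞), F.Subcartesian →
      Function.Injective (fun s : NerveTot (Sh 𝔟) 1 => NerveTot.map (sharpF F) s) →
      (∀ (X Y : Sh 𝔞) (u : X ⟶ Y),
        ¬ (∃ s : NerveTot (Sh 𝔟) 1,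
            NerveTot.map (sharpF F) s = ⟨X, Y, Pth.cons u (Pth.nil Y)⟩) →
        Subsingleton (𝔞.Hom (Sh.base u) X.2 Y.2)) →
      ∀ n : ℕ,
        (∀ c c' : RawCochain M n, IsCochain M c → IsCochain M c' →
          Fstar F M c = Fstar F M c' → c = c') ∧
        (∀ c' : RawCochain (Bimod.pullback F M) n,
          IsCochain (Bimod.pullback F M) c' →
          ∃ c : RawCochain M n, IsCochain M c ∧ Fstar F M c = c') ∧
        (∀ c : RawCochain M n,
          Fstar F M (dRaw M c) = dRaw (Bimod.pullback F M) (Fstar F M c))) :=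
  ⟨fun 𝒮 hS => isCochainIso_fstar M (restrictProj_subcartesian 𝒮.incl 𝔞)
      (restrictProj_nerveOneInjective 𝒮) (restrictProj_censoring 𝒮 hS),
    fun _ _ _ _ _ hF hinj hcens => isCochainIso_fstar M hF hinj hcens⟩

end MapGr
end

section
/- Let (𝒵, 𝒱) be an ideal-subcategory decomposition of a small category 𝒰 with Ob(𝒱) = Ob(𝒰), let 𝔞 be a 𝒰-graded category and 𝔟 = 𝔞^φ for the inclusion φ : 𝒱 ⊆ 𝒰. Assume the ideal 𝒵 is thin: for z ∈ 𝒵(V,U) and arbitrary u' ∈ 𝒰(V',V), u ∈ 𝒰(U,U'), one has u' ∉ 𝒵 and u ∉ 𝒵. Then the functor (−)|^𝔞 : Bimod_𝒵(𝔟) → Bimod_𝒵(𝔞), which extends a 𝔟-bimodule on 𝒵 to an 𝔞-bimodule on 𝒵 by declaring the actions of morphisms of 𝒵 to be zero, and the restriction functor (−)|_𝔟 : Bimod_𝒵(𝔞) → Bimod_𝒵(𝔟), are mutually inverse isomorphisms of categories Bimod_𝒵(𝔟) ≅ Bimod_𝒵(𝔞). -/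
open CategoryTheory

universe u

namespace MapGr

variable {k : Type u} [CommRing k]
variable {𝒰 : Type u} [Category.{u} 𝒰]

/-- A wide subcategory of `𝒰` (`Ob 𝒱 = Ob 𝒰`): a class of morphisms closed under
identities and composition. -/
structure WideSubcat (𝒰 : Type u) [Category.{u} 𝒰] where
  homs : ∀ {X Y : 𝒰}, (X ⟶ Y) → Prop
  id_mem : ∀ X : 𝒰, homs (𝟙 X)
  comp_mem : ∀ {X Y Z : 𝒰} (f : X ⟶ Y) (g : Y ⟶ Z), homs f → homs g → homs (f ≫ g)

/-- A (two-sided) ideal in a category `𝒰`. -/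
structure CatIdeal (𝒰 : Type u) [Category.{u} 𝒰] where
  mem : ∀ {X Y : 𝒰}, (X ⟶ Y) → Prop
  comp_left : ∀ {X Y Z : 𝒰} (f : X ⟶ Y) (g : Y ⟶ Z), mem g → mem (f ≫ g)
  comp_right : ∀ {X Y Z : 𝒰} (f : X ⟶ Y) (g : Y ⟶ Z), mem f → mem (f ≫ g)

/-- An ideal `𝒵` is thin if it contains no consecutive morphisms. -/
def CatIdeal.Thin (Z : CatIdeal 𝒰) : Prop :=
  ∀ {V U : 𝒰} (z : V ⟶ U), Z.mem z →
    (∀ {V' : 𝒰} (u' : V' ⟶ V), ¬ Z.mem u') ∧ (∀ {U' : 𝒰} (u : U ⟶ U'), ¬ Z.mem u)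

section BimodOnIdeal

variable (k) (𝔞 : GradedCat k 𝒰) (Z : CatIdeal 𝒰) (W : WideSubcat 𝒰)

/-- An `𝔞`-bimodule on the ideal `𝒵`: `k`-modules `M_z(B, A)` for `z ∈ 𝒵` with
associative unital `k`-bilinear actions by all morphisms of `𝒰`. -/
structure BimodZa : Type (u + 1) where
  M : ∀ {X Y : 𝒰} (z : X ⟶ Y), Z.mem z → 𝔞.Obj X → 𝔞.Obj Y → ModuleCat.{u} k
  actL : ∀ {X Y Y' : 𝒰} {f : Y ⟶ Y'} {z : X ⟶ Y} {hz : Z.mem z} {B : 𝔞.Obj X}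
    {A : 𝔞.Obj Y} {A' : 𝔞.Obj Y'}, 𝔞.Hom f A A' → M z hz B A →
    M (z ≫ f) (Z.comp_right z f hz) B A'
  actR : ∀ {X Y Y' : 𝒰} {z : Y ⟶ Y'} {g : X ⟶ Y} {hz : Z.mem z} {B' : 𝔞.Obj X}
    {B : 𝔞.Obj Y} {A : 𝔞.Obj Y'}, M z hz B A → 𝔞.Hom g B' B →
    M (g ≫ z) (Z.comp_left g z hz) B' A
  actL_add_left : ∀ {X Y Y' : 𝒰} {f : Y ⟶ Y'} {z : X ⟶ Y} {hz : Z.mem z} {B A A'}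
    (x x' : 𝔞.Hom f A A') (m : M z hz B A), actL (x + x') m = actL x m + actL x' m
  actL_add_right : ∀ {X Y Y' : 𝒰} {f : Y ⟶ Y'} {z : X ⟶ Y} {hz : Z.mem z} {B A A'}
    (x : 𝔞.Hom f A A') (m m' : M z hz B A), actL x (m + m') = actL x m + actL x m'
  actL_smul_left : ∀ {X Y Y' : 𝒰} {f : Y ⟶ Y'} {z : X ⟶ Y} {hz : Z.mem z} {B A A'}
    (r : k) (x : 𝔞.Hom f A A') (m : M z hz B A), actL (r • x) m = r • actL x m
  actL_smul_right : ∀ {X Y Y' : 𝒰} {f : Y ⟶ Y'} {z : X ⟶ Y} {hz : Z.mem z} {B A A'}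
    (r : k) (x : 𝔞.Hom f A A') (m : M z hz B A), actL x (r • m) = r • actL x m
  actR_add_left : ∀ {X Y Y' : 𝒰} {z : Y ⟶ Y'} {g : X ⟶ Y} {hz : Z.mem z} {B' B A}
    (m m' : M z hz B A) (y : 𝔞.Hom g B' B), actR (m + m') y = actR m y + actR m' y
  actR_add_right : ∀ {X Y Y' : 𝒰} {z : Y ⟶ Y'} {g : X ⟶ Y} {hz : Z.mem z} {B' B A}
    (m : M z hz B A) (y y' : 𝔞.Hom g B' B), actR m (y + y') = actR m y + actR m y'
  actR_smul_left : ∀ {X Y Y' : 𝒰} {z : Y ⟶ Y'} {g : X ⟶ Y} {hz : Z.mem z} {B' B A}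
    (r : k) (m : M z hz B A) (y : 𝔞.Hom g B' B), actR (r • m) y = r • actR m y
  actR_smul_right : ∀ {X Y Y' : 𝒰} {z : Y ⟶ Y'} {g : X ⟶ Y} {hz : Z.mem z} {B' B A}
    (r : k) (m : M z hz B A) (y : 𝔞.Hom g B' B), actR m (r • y) = r • actR m y
  actL_id : ∀ {X Y : 𝒰} {z : X ⟶ Y} {hz : Z.mem z} {B A} (m : M z hz B A),
    HEq (actL (𝔞.id A) m) m
  actR_id : ∀ {X Y : 𝒰} {z : X ⟶ Y} {hz : Z.mem z} {B A} (m : M z hz B A),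
    HEq (actR m (𝔞.id B)) m
  actL_actL : ∀ {X Y Y' Y'' : 𝒰} {f' : Y' ⟶ Y''} {f : Y ⟶ Y'} {z : X ⟶ Y}
    {hz : Z.mem z} {B A A' A''} (x : 𝔞.Hom f' A' A'') (y : 𝔞.Hom f A A')
    (m : M z hz B A), HEq (actL x (actL y m)) (actL (𝔞.comp x y) m)
  actR_actR : ∀ {X X' X'' Y : 𝒰} {z : X ⟶ Y} {g : X' ⟶ X} {g' : X'' ⟶ X'}
    {hz : Z.mem z} {B'' B' B A} (m : M z hz B A) (y : 𝔞.Hom g B' B)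
    (y' : 𝔞.Hom g' B'' B'), HEq (actR (actR m y) y') (actR m (𝔞.comp y y'))
  actL_actR : ∀ {X' X Y Y' : 𝒰} {f : Y ⟶ Y'} {z : X ⟶ Y} {g : X' ⟶ X} {hz : Z.mem z}
    {B' B A A'} (x : 𝔞.Hom f A A') (m : M z hz B A) (y : 𝔞.Hom g B' B),
    HEq (actL x (actR m y)) (actR (actL x m) y)

/-- A `𝔟`-bimodule on the ideal `𝒵` (for `𝔟 = 𝔞^φ`, `φ : 𝒱 ⊆ 𝒰` a wide subcategory):
`k`-modules `M_z(B, A)` for `z ∈ 𝒵` with actions only by the morphisms of `𝒱`. -/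
structure BimodZb : Type (u + 1) where
  M : ∀ {X Y : 𝒰} (z : X ⟶ Y), Z.mem z → 𝔞.Obj X → 𝔞.Obj Y → ModuleCat.{u} k
  actL : ∀ {X Y Y' : 𝒰} {f : Y ⟶ Y'} (hf : W.homs f) {z : X ⟶ Y} {hz : Z.mem z}
    {B : 𝔞.Obj X} {A : 𝔞.Obj Y} {A' : 𝔞.Obj Y'}, 𝔞.Hom f A A' → M z hz B A →
    M (z ≫ f) (Z.comp_right z f hz) B A'
  actR : ∀ {X Y Y' : 𝒰} {z : Y ⟶ Y'} {g : X ⟶ Y} (hg : W.homs g) {hz : Z.mem z}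
    {B' : 𝔞.Obj X} {B : 𝔞.Obj Y} {A : 𝔞.Obj Y'}, M z hz B A → 𝔞.Hom g B' B →
    M (g ≫ z) (Z.comp_left g z hz) B' A
  actL_add_left : ∀ {X Y Y' : 𝒰} {f : Y ⟶ Y'} (hf : W.homs f) {z : X ⟶ Y}
    {hz : Z.mem z} {B A A'} (x x' : 𝔞.Hom f A A') (m : M z hz B A),
    actL hf (x + x') m = actL hf x m + actL hf x' m
  actL_add_right : ∀ {X Y Y' : 𝒰} {f : Y ⟶ Y'} (hf : W.homs f) {z : X ⟶ Y}
    {hz : Z.mem z} {B A A'} (x : 𝔞.Hom f A A') (m m' : M z hz B A),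
    actL hf x (m + m') = actL hf x m + actL hf x m'
  actL_smul_left : ∀ {X Y Y' : 𝒰} {f : Y ⟶ Y'} (hf : W.homs f) {z : X ⟶ Y}
    {hz : Z.mem z} {B A A'} (r : k) (x : 𝔞.Hom f A A') (m : M z hz B A),
    actL hf (r • x) m = r • actL hf x m
  actL_smul_right : ∀ {X Y Y' : 𝒰} {f : Y ⟶ Y'} (hf : W.homs f) {z : X ⟶ Y}
    {hz : Z.mem z} {B A A'} (r : k) (x : 𝔞.Hom f A A') (m : M z hz B A),
    actL hf x (r • m) = r • actL hf x m
  actR_add_left : ∀ {X Y Y' : 𝒰} {z : Y ⟶ Y'} {g : X ⟶ Y} (hg : W.homs g)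
    {hz : Z.mem z} {B' B A} (m m' : M z hz B A) (y : 𝔞.Hom g B' B),
    actR hg (m + m') y = actR hg m y + actR hg m' y
  actR_add_right : ∀ {X Y Y' : 𝒰} {z : Y ⟶ Y'} {g : X ⟶ Y} (hg : W.homs g)
    {hz : Z.mem z} {B' B A} (m : M z hz B A) (y y' : 𝔞.Hom g B' B),
    actR hg m (y + y') = actR hg m y + actR hg m y'
  actR_smul_left : ∀ {X Y Y' : 𝒰} {z : Y ⟶ Y'} {g : X ⟶ Y} (hg : W.homs g)
    {hz : Z.mem z} {B' B A} (r : k) (m : M z hz B A) (y : 𝔞.Hom g B' B),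
    actR hg (r • m) y = r • actR hg m y
  actR_smul_right : ∀ {X Y Y' : 𝒰} {z : Y ⟶ Y'} {g : X ⟶ Y} (hg : W.homs g)
    {hz : Z.mem z} {B' B A} (r : k) (m : M z hz B A) (y : 𝔞.Hom g B' B),
    actR hg m (r • y) = r • actR hg m y
  actL_id : ∀ {X Y : 𝒰} {z : X ⟶ Y} {hz : Z.mem z} {B A} (m : M z hz B A),
    HEq (actL (W.id_mem Y) (𝔞.id A) m) m
  actR_id : ∀ {X Y : 𝒰} {z : X ⟶ Y} {hz : Z.mem z} {B A} (m : M z hz B A),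
    HEq (actR (W.id_mem X) m (𝔞.id B)) m
  actL_actL : ∀ {X Y Y' Y'' : 𝒰} {f' : Y' ⟶ Y''} {f : Y ⟶ Y'} (hf' : W.homs f')
    (hf : W.homs f) {z : X ⟶ Y} {hz : Z.mem z} {B A A' A''} (x : 𝔞.Hom f' A' A'')
    (y : 𝔞.Hom f A A') (m : M z hz B A),
    HEq (actL hf' x (actL hf y m)) (actL (W.comp_mem f f' hf hf') (𝔞.comp x y) m)
  actR_actR : ∀ {X X' X'' Y : 𝒰} {z : X ⟶ Y} {g : X' ⟶ X} {g' : X'' ⟶ X'}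
    (hg : W.homs g) (hg' : W.homs g') {hz : Z.mem z} {B'' B' B A} (m : M z hz B A)
    (y : 𝔞.Hom g B' B) (y' : 𝔞.Hom g' B'' B'),
    HEq (actR hg' (actR hg m y) y') (actR (W.comp_mem g' g hg' hg) m (𝔞.comp y y'))
  actL_actR : ∀ {X' X Y Y' : 𝒰} {f : Y ⟶ Y'} {z : X ⟶ Y} {g : X' ⟶ X}
    (hf : W.homs f) (hg : W.homs g) {hz : Z.mem z} {B' B A A'} (x : 𝔞.Hom f A A')
    (m : M z hz B A) (y : 𝔞.Hom g B' B),
    HEq (actL hf x (actR hg m y)) (actR hg (actL hf x m) y)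

variable {k 𝔞 Z W}

/-- Morphisms of `𝔞`-bimodules on `𝒵`. -/
@[ext]
structure BimodZaHom (N N' : BimodZa k 𝔞 Z) where
  app : ∀ {X Y : 𝒰} (z : X ⟶ Y) (hz : Z.mem z) (B : 𝔞.Obj X) (A : 𝔞.Obj Y),
    N.M z hz B A → N'.M z hz B A
  app_add : ∀ {X Y : 𝒰} (z : X ⟶ Y) (hz : Z.mem z) (B A) (m m' : N.M z hz B A),
    app z hz B A (m + m') = app z hz B A m + app z hz B A m'
  app_smul : ∀ {X Y : 𝒰} (z : X ⟶ Y) (hz : Z.mem z) (B A) (r : k)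
    (m : N.M z hz B A), app z hz B A (r • m) = r • app z hz B A m
  app_actL : ∀ {X Y Y' : 𝒰} {f : Y ⟶ Y'} {z : X ⟶ Y} (hz : Z.mem z) {B A A'}
    (x : 𝔞.Hom f A A') (m : N.M z hz B A),
    app _ _ _ _ (N.actL x m) = N'.actL x (app z hz B A m)
  app_actR : ∀ {X Y Y' : 𝒰} {z : Y ⟶ Y'} {g : X ⟶ Y} (hz : Z.mem z) {B' B A}
    (m : N.M z hz B A) (y : 𝔞.Hom g B' B),
    app _ _ _ _ (N.actR m y) = N'.actR (app z hz B A m) y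

/-- Morphisms of `𝔟`-bimodules on `𝒵`. -/
@[ext]
structure BimodZbHom (N N' : BimodZb k 𝔞 Z W) where
  app : ∀ {X Y : 𝒰} (z : X ⟶ Y) (hz : Z.mem z) (B : 𝔞.Obj X) (A : 𝔞.Obj Y),
    N.M z hz B A → N'.M z hz B A
  app_add : ∀ {X Y : 𝒰} (z : X ⟶ Y) (hz : Z.mem z) (B A) (m m' : N.M z hz B A),
    app z hz B A (m + m') = app z hz B A m + app z hz B A m'
  app_smul : ∀ {X Y : 𝒰} (z : X ⟶ Y) (hz : Z.mem z) (B A) (r : k)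
    (m : N.M z hz B A), app z hz B A (r • m) = r • app z hz B A m
  app_actL : ∀ {X Y Y' : 𝒰} {f : Y ⟶ Y'} (hf : W.homs f) {z : X ⟶ Y}
    (hz : Z.mem z) {B A A'} (x : 𝔞.Hom f A A') (m : N.M z hz B A),
    app _ _ _ _ (N.actL hf x m) = N'.actL hf x (app z hz B A m)
  app_actR : ∀ {X Y Y' : 𝒰} {z : Y ⟶ Y'} {g : X ⟶ Y} (hg : W.homs g)
    (hz : Z.mem z) {B' B A} (m : N.M z hz B A) (y : 𝔞.Hom g B' B),
    app _ _ _ _ (N.actR hg m y) = N'.actR hg (app z hz B A m) y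

instance : Category.{u} (BimodZa k 𝔞 Z) where
  Hom N N' := BimodZaHom N N'
  id N :=
    { app := fun z hz B A m => m
      app_add := by intros; rfl
      app_smul := by intros; rfl
      app_actL := by intros; rfl
      app_actR := by intros; rfl }
  comp T T' :=
    { app := fun z hz B A m => T'.app z hz B A (T.app z hz B A m)
      app_add := by intros; (try dsimp only); rw [T.app_add, T'.app_add]
      app_smul := by intros; (try dsimp only); rw [T.app_smul, T'.app_smul]
      app_actL := by intros; (try dsimp only); rw [T.app_actL, T'.app_actL]
      app_actR := by intros; (try dsimp only); rw [T.app_actR, T'.app_actR] }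
  id_comp T := rfl
  comp_id T := rfl
  assoc T T' T'' := rfl

instance : Category.{u} (BimodZb k 𝔞 Z W) where
  Hom N N' := BimodZbHom N N'
  id N :=
    { app := fun z hz B A m => m
      app_add := by intros; rfl
      app_smul := by intros; rfl
      app_actL := by intros; rfl
      app_actR := by intros; rfl }
  comp T T' :=
    { app := fun z hz B A m => T'.app z hz B A (T.app z hz B A m)
      app_add := by intros; (try dsimp only); rw [T.app_add, T'.app_add]
      app_smul := by intros; (try dsimp only); rw [T.app_smul, T'.app_smul]
      app_actL := by intros; (try dsimp only); rw [T.app_actL, T'.app_actL]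
      app_actR := by intros; (try dsimp only); rw [T.app_actR, T'.app_actR] }
  id_comp T := rfl
  comp_id T := rfl
  assoc T T' T'' := rfl

/-- The restriction functor `(−)|_𝔟 : Bimod_𝒵(𝔞) → Bimod_𝒵(𝔟)`. -/
def restrictZ : BimodZa k 𝔞 Z ⥤ BimodZb k 𝔞 Z W where
  obj N :=
    { M := N.M
      actL := fun {X Y Y' f} _hf {z hz B A A'} x m => N.actL x m
      actR := fun {X Y Y' z g} _hg {hz B' B A} m y => N.actR m y
      actL_add_left := by intro X Y Y' f hf z hz B A A' x x' m
                          exact N.actL_add_left x x' m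
      actL_add_right := by intro X Y Y' f hf z hz B A A' x m m'
                           exact N.actL_add_right x m m'
      actL_smul_left := by intro X Y Y' f hf z hz B A A' r x m
                           exact N.actL_smul_left r x m
      actL_smul_right := by intro X Y Y' f hf z hz B A A' r x m
                            exact N.actL_smul_right r x m
      actR_add_left := by intro X Y Y' z g hg hz B' B A m m' y
                          exact N.actR_add_left m m' y
      actR_add_right := by intro X Y Y' z g hg hz B' B A m y y'
                           exact N.actR_add_right m y y'
      actR_smul_left := by intro X Y Y' z g hg hz B' B A r m y
                           exact N.actR_smul_left r m y
      actR_smul_right := by intro X Y Y' z g hg hz B' B A r m y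
                            exact N.actR_smul_right r m y
      actL_id := by intro X Y z hz B A m; exact N.actL_id m
      actR_id := by intro X Y z hz B A m; exact N.actR_id m
      actL_actL := by intro X Y Y' Y'' f' f hf' hf z hz B A A' A'' x y m
                      exact N.actL_actL x y m
      actR_actR := by intro X X' X'' Y z g g' hg hg' hz B'' B' B A m y y'
                      exact N.actR_actR m y y'
      actL_actR := by intro X' X Y Y' f z g hf hg hz B' B A A' x m y
                      exact N.actL_actR x m y }
  map T :=
    { app := T.app
      app_add := T.app_add
      app_smul := T.app_smul
      app_actL := by intro X Y Y' f hf z hz B A A' x m; exact T.app_actL hz x m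
      app_actR := by intro X Y Y' z g hg hz B' B A m y; exact T.app_actR hz m y }
  map_id _ := rfl
  map_comp _ _ := rfl

end BimodOnIdeal

section Extension

variable {𝔞 : GradedCat k 𝒰} {Z : CatIdeal 𝒰} {W : WideSubcat 𝒰}

theorem BimodZb.actL_zero (N : BimodZb k 𝔞 Z W) {X Y Y' : 𝒰} {f : Y ⟶ Y'}
    (hf : W.homs f) {z : X ⟶ Y} {hz : Z.mem z} {B A A'} (x : 𝔞.Hom f A A') :
    N.actL hf x (0 : N.M z hz B A) = 0 := by
  have h := N.actL_add_right hf x (0 : N.M z hz B A) 0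
  rw [add_zero] at h
  exact left_eq_add.mp h

theorem BimodZb.actR_zero (N : BimodZb k 𝔞 Z W) {X Y Y' : 𝒰} {z : Y ⟶ Y'}
    {g : X ⟶ Y} (hg : W.homs g) {hz : Z.mem z} {B' B A} (y : 𝔞.Hom g B' B) :
    N.actR hg (0 : N.M z hz B A) y = 0 := by
  have h := N.actR_add_left hg (0 : N.M z hz B A) 0 y
  rw [add_zero] at h
  exact left_eq_add.mp h

theorem BimodZbHom.app_zero {N N' : BimodZb k 𝔞 Z W} (T : BimodZbHom N N')
    {X Y : 𝒰} (z : X ⟶ Y) (hz : Z.mem z) (B A) :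
    T.app z hz B A 0 = 0 := by
  have h := T.app_add z hz B A 0 0
  rw [add_zero] at h
  exact left_eq_add.mp h

theorem zaheq {N : BimodZa k 𝔞 Z} {X Y : 𝒰} {z z' : X ⟶ Y} (h : z = z')
    {hz : Z.mem z} {hz' : Z.mem z'} {B A} {m : N.M z hz B A} {m' : N.M z' hz' B A}
    (hmm : HEq m m') : HEq m m' := hmm

theorem heq_zero_zero {N : BimodZb k 𝔞 Z W} {X Y : 𝒰} {z z' : X ⟶ Y} (h : z = z')
    (hz : Z.mem z) (hz' : Z.mem z') {B A} :
    HEq (0 : N.M z hz B A) (0 : N.M z' hz' B A) := by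
  subst h; rfl

variable (hdec : ∀ {X Y : 𝒰} (f : X ⟶ Y), (W.homs f ∨ Z.mem f) ∧ ¬ (W.homs f ∧ Z.mem f))

open Classical in
/-- The extended left action: zero on the morphisms of `𝒵`. -/
noncomputable def eactL (N : BimodZb k 𝔞 Z W) {X Y Y' : 𝒰} {f : Y ⟶ Y'} {z : X ⟶ Y}
    {hz : Z.mem z} {B A A'} (x : 𝔞.Hom f A A') (m : N.M z hz B A) :
    N.M (z ≫ f) (Z.comp_right z f hz) B A' :=
  if hf : W.homs f then N.actL hf x m else 0

open Classical in
/-- The extended right action: zero on the morphisms of `𝒵`. -/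
noncomputable def eactR (N : BimodZb k 𝔞 Z W) {X Y Y' : 𝒰} {z : Y ⟶ Y'} {g : X ⟶ Y}
    {hz : Z.mem z} {B' B A} (m : N.M z hz B A) (y : 𝔞.Hom g B' B) :
    N.M (g ≫ z) (Z.comp_left g z hz) B' A :=
  if hg : W.homs g then N.actR hg m y else 0

theorem eactL_heq_congr {N : BimodZb k 𝔞 Z W} {X Y : 𝒰} {z z' : X ⟶ Y} (h : z = z')
    {hz : Z.mem z} {hz' : Z.mem z'} {B A} {m : N.M z hz B A} {m' : N.M z' hz' B A}
    (hm : HEq m m') : True := trivial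

end Extension

end MapGr

namespace MapGr

variable {k : Type u} [CommRing k]
variable {𝒰 : Type u} [Category.{u} 𝒰]
variable {𝔞 : GradedCat k 𝒰} {Z : CatIdeal 𝒰} {W : WideSubcat 𝒰}

/-- The extension functor `(−)|^𝔞 : Bimod_𝒵(𝔟) → Bimod_𝒵(𝔞)`, extending a
`𝔟`-bimodule on `𝒵` to an `𝔞`-bimodule on `𝒵` by letting the morphisms of `𝒵` act by
zero. -/
noncomputable def extendZ
    (hdec : ∀ {X Y : 𝒰} (f : X ⟶ Y), (W.homs f ∨ Z.mem f) ∧ ¬ (W.homs f ∧ Z.mem f)) :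
    BimodZb k 𝔞 Z W ⥤ BimodZa k 𝔞 Z where
  obj N :=
    { M := N.M
      actL := fun {X Y Y' f z hz B A A'} x m => eactL N x m
      actR := fun {X Y Y' z g hz B' B A} m y => eactR N m y
      actL_add_left := by
        intro X Y Y' f z hz B A A' x x' m
        (try dsimp only); simp only [eactL]
        by_cases hf : W.homs f
        · simp only [dif_pos hf]; exact N.actL_add_left hf x x' m
        · simp only [dif_neg hf]; simp
      actL_add_right := by
        intro X Y Y' f z hz B A A' x m m'
        (try dsimp only); simp only [eactL]
        by_cases hf : W.homs f
        · simp only [dif_pos hf]; exact N.actL_add_right hf x m m'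
        · simp only [dif_neg hf]; simp
      actL_smul_left := by
        intro X Y Y' f z hz B A A' r x m
        (try dsimp only); simp only [eactL]
        by_cases hf : W.homs f
        · simp only [dif_pos hf]; exact N.actL_smul_left hf r x m
        · simp only [dif_neg hf]; simp
      actL_smul_right := by
        intro X Y Y' f z hz B A A' r x m
        (try dsimp only); simp only [eactL]
        by_cases hf : W.homs f
        · simp only [dif_pos hf]; exact N.actL_smul_right hf r x m
        · simp only [dif_neg hf]; simp
      actR_add_left := by
        intro X Y Y' z g hz B' B A m m' y
        (try dsimp only); simp only [eactR]
        by_cases hg : W.homs g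
        · simp only [dif_pos hg]; exact N.actR_add_left hg m m' y
        · simp only [dif_neg hg]; simp
      actR_add_right := by
        intro X Y Y' z g hz B' B A m y y'
        (try dsimp only); simp only [eactR]
        by_cases hg : W.homs g
        · simp only [dif_pos hg]; exact N.actR_add_right hg m y y'
        · simp only [dif_neg hg]; simp
      actR_smul_left := by
        intro X Y Y' z g hz B' B A r m y
        (try dsimp only); simp only [eactR]
        by_cases hg : W.homs g
        · simp only [dif_pos hg]; exact N.actR_smul_left hg r m y
        · simp only [dif_neg hg]; simp
      actR_smul_right := by
        intro X Y Y' z g hz B' B A r m y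
        (try dsimp only); simp only [eactR]
        by_cases hg : W.homs g
        · simp only [dif_pos hg]; exact N.actR_smul_right hg r m y
        · simp only [dif_neg hg]; simp
      actL_id := by
        intro X Y z hz B A m
        (try dsimp only); simp only [eactL]
        simp only [dif_pos (W.id_mem Y)]
        exact N.actL_id m
      actR_id := by
        intro X Y z hz B A m
        (try dsimp only); simp only [eactR]
        simp only [dif_pos (W.id_mem X)]
        exact N.actR_id m
      actL_actL := by
        intro X Y Y' Y'' f' f z hz B A A' A'' x y m
        (try dsimp only); simp only [eactL]
        by_cases hf : W.homs f
        · by_cases hf' : W.homs f'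
          · simp only [dif_pos hf, dif_pos hf', dif_pos (W.comp_mem f f' hf hf')]
            exact N.actL_actL hf' hf x y m
          · have hc : ¬ W.homs (f ≫ f') := by
              intro hc
              have hf'Z : Z.mem f' := (hdec f').1.resolve_left hf'
              exact (hdec (f ≫ f')).2 ⟨hc, Z.comp_left f f' hf'Z⟩
            simp only [dif_pos hf, dif_neg hf', dif_neg hc]
            exact heq_zero_zero (by simp) _ _
        · have hfZ : Z.mem f := (hdec f).1.resolve_left hf
          have hc : ¬ W.homs (f ≫ f') := by
            intro hc
            exact (hdec (f ≫ f')).2 ⟨hc, Z.comp_right f f' hfZ⟩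
          simp only [dif_neg hf, dif_neg hc]
          by_cases hf' : W.homs f'
          · rw [dif_pos hf', N.actL_zero hf' x]
            exact heq_zero_zero (by simp) _ _
          · simp only [dif_neg hf']
            exact heq_zero_zero (by simp) _ _
      actR_actR := by
        intro X X' X'' Y z g g' hz B'' B' B A m y y'
        (try dsimp only); simp only [eactR]
        by_cases hg : W.homs g
        · by_cases hg' : W.homs g'
          · simp only [dif_pos hg, dif_pos hg', dif_pos (W.comp_mem g' g hg' hg)]
            exact N.actR_actR hg hg' m y y'
          · have hc : ¬ W.homs (g' ≫ g) := by
              intro hc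
              have hZ : Z.mem g' := (hdec g').1.resolve_left hg'
              exact (hdec (g' ≫ g)).2 ⟨hc, Z.comp_right g' g hZ⟩
            simp only [dif_pos hg, dif_neg hg', dif_neg hc]
            exact heq_zero_zero (by simp) _ _
        · have hgZ : Z.mem g := (hdec g).1.resolve_left hg
          have hc : ¬ W.homs (g' ≫ g) := by
            intro hc
            exact (hdec (g' ≫ g)).2 ⟨hc, Z.comp_left g' g hgZ⟩
          simp only [dif_neg hg, dif_neg hc]
          by_cases hg' : W.homs g'
          · rw [dif_pos hg', N.actR_zero hg' y']
            exact heq_zero_zero (by simp) _ _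
          · simp only [dif_neg hg']
            exact heq_zero_zero (by simp) _ _
      actL_actR := by
        intro X' X Y Y' f z g hz B' B A A' x m y
        (try dsimp only); simp only [eactL, eactR]
        by_cases hf : W.homs f
        · by_cases hg : W.homs g
          · simp only [dif_pos hf, dif_pos hg]
            exact N.actL_actR hf hg x m y
          · simp only [dif_neg hg]
            rw [dif_pos hf, N.actL_zero hf x]
            exact heq_zero_zero (by simp) _ _
        · by_cases hg : W.homs g
          · simp only [dif_neg hf]
            rw [dif_pos hg, N.actR_zero hg y]
            exact heq_zero_zero (by simp) _ _
          · simp only [dif_neg hf, dif_neg hg]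
            exact heq_zero_zero (by simp) _ _ }
  map {N N'} T :=
    { app := T.app
      app_add := T.app_add
      app_smul := T.app_smul
      app_actL := by
        intro X Y Y' f z hz B A A' x m
        (try dsimp only); simp only [eactL]
        by_cases hf : W.homs f
        · simp only [dif_pos hf]
          exact T.app_actL hf hz x m
        · simp only [dif_neg hf]
          exact T.app_zero _ _ _ _
      app_actR := by
        intro X Y Y' z g hz B' B A m y
        (try dsimp only); simp only [eactR]
        by_cases hg : W.homs g
        · simp only [dif_pos hg]
          exact T.app_actR hg hz m y
        · simp only [dif_neg hg]
          exact T.app_zero _ _ _ _ }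
  map_id _ := rfl
  map_comp _ _ := rfl

theorem BimodZb.ext {N N' : BimodZb k 𝔞 Z W}
    (hM : @BimodZb.M k _ 𝒰 _ 𝔞 Z W N = @BimodZb.M k _ 𝒰 _ 𝔞 Z W N')
    (hL : HEq (@BimodZb.actL k _ 𝒰 _ 𝔞 Z W N) (@BimodZb.actL k _ 𝒰 _ 𝔞 Z W N'))
    (hR : HEq (@BimodZb.actR k _ 𝒰 _ 𝔞 Z W N) (@BimodZb.actR k _ 𝒰 _ 𝔞 Z W N')) :
    N = N' := by
  cases N; cases N'
  cases hM; cases hL; cases hR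
  rfl

theorem BimodZa.ext {N N' : BimodZa k 𝔞 Z}
    (hM : @BimodZa.M k _ 𝒰 _ 𝔞 Z N = @BimodZa.M k _ 𝒰 _ 𝔞 Z N')
    (hL : HEq (@BimodZa.actL k _ 𝒰 _ 𝔞 Z N) (@BimodZa.actL k _ 𝒰 _ 𝔞 Z N'))
    (hR : HEq (@BimodZa.actR k _ 𝒰 _ 𝔞 Z N) (@BimodZa.actR k _ 𝒰 _ 𝔞 Z N')) :
    N = N' := by
  cases N; cases N'
  cases hM; cases hL; cases hR
  rfl

theorem BimodZbHom.hext {N₁ N₁' N N' : BimodZb k 𝔞 Z W} (h : N₁ = N) (h' : N₁' = N')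
    {T₁ : N₁ ⟶ N₁'} {T : N ⟶ N'}
    (happ : HEq (@BimodZbHom.app k _ 𝒰 _ 𝔞 Z W N₁ N₁' T₁)
      (@BimodZbHom.app k _ 𝒰 _ 𝔞 Z W N N' T)) :
    HEq T₁ T := by
  subst h h'
  exact heq_of_eq (BimodZbHom.ext (eq_of_heq happ))

theorem BimodZaHom.hext {N₁ N₁' N N' : BimodZa k 𝔞 Z} (h : N₁ = N) (h' : N₁' = N')
    {T₁ : N₁ ⟶ N₁'} {T : N ⟶ N'}
    (happ : HEq (@BimodZaHom.app k _ 𝒰 _ 𝔞 Z N₁ N₁' T₁)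
      (@BimodZaHom.app k _ 𝒰 _ 𝔞 Z N N' T)) :
    HEq T₁ T := by
  subst h h'
  exact heq_of_eq (BimodZaHom.ext (eq_of_heq happ))

theorem eactL_of_mem (N : BimodZb k 𝔞 Z W) {X Y Y' : 𝒰} {f : Y ⟶ Y'} (hf : W.homs f)
    {z : X ⟶ Y} {hz : Z.mem z} {B A A'} (x : 𝔞.Hom f A A') (m : N.M z hz B A) :
    eactL N x m = N.actL hf x m :=
  dif_pos hf

theorem eactR_of_mem (N : BimodZb k 𝔞 Z W) {X Y Y' : 𝒰} {z : Y ⟶ Y'} {g : X ⟶ Y}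
    (hg : W.homs g) {hz : Z.mem z} {B' B A} (m : N.M z hz B A) (y : 𝔞.Hom g B' B) :
    eactR N m y = N.actR hg m y :=
  dif_pos hg

theorem restrictZ_obj_extendZ_obj
    (hdec : ∀ {X Y : 𝒰} (f : X ⟶ Y), (W.homs f ∨ Z.mem f) ∧ ¬ (W.homs f ∧ Z.mem f))
    (N : BimodZb k 𝔞 Z W) : restrictZ.obj ((extendZ hdec).obj N) = N :=
  BimodZb.ext rfl
    (heq_of_eq <| by funext X Y Y' f hf z hz B A A' x m; exact eactL_of_mem N hf x m)
    (heq_of_eq <| by funext X Y Y' z g hg hz B' B A m y; exact eactR_of_mem N hg m y)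

theorem CatIdeal.Thin.homs_of_comp_right (hthin : Z.Thin)
    (hdec : ∀ {X Y : 𝒰} (f : X ⟶ Y), (W.homs f ∨ Z.mem f) ∧ ¬ (W.homs f ∧ Z.mem f))
    {X Y Y' : 𝒰} {z : X ⟶ Y} (hz : Z.mem z) (f : Y ⟶ Y') : W.homs f :=
  (hdec f).1.resolve_right ((hthin z hz).2 f)

theorem CatIdeal.Thin.homs_of_comp_left (hthin : Z.Thin)
    (hdec : ∀ {X Y : 𝒰} (f : X ⟶ Y), (W.homs f ∨ Z.mem f) ∧ ¬ (W.homs f ∧ Z.mem f))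
    {X Y Y' : 𝒰} {z : Y ⟶ Y'} (hz : Z.mem z) (g : X ⟶ Y) : W.homs g :=
  (hdec g).1.resolve_right ((hthin z hz).1 g)

/-- Thinness puts every morphism acting on `𝒵` into `𝒱`, so the zero branch of the extended
actions is never taken. -/
theorem extendZ_obj_restrictZ_obj
    (hdec : ∀ {X Y : 𝒰} (f : X ⟶ Y), (W.homs f ∨ Z.mem f) ∧ ¬ (W.homs f ∧ Z.mem f))
    (hthin : Z.Thin) (N : BimodZa k 𝔞 Z) :
    (extendZ hdec).obj ((restrictZ (W := W)).obj N) = N :=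
  BimodZa.ext rfl
    (heq_of_eq <| by
      funext X Y Y' f z hz B A A' x m
      exact eactL_of_mem ((restrictZ (W := W)).obj N) (hthin.homs_of_comp_right hdec hz f) x m)
    (heq_of_eq <| by
      funext X Y Y' z g hz B' B A m y
      exact eactR_of_mem ((restrictZ (W := W)).obj N) (hthin.homs_of_comp_left hdec hz g) m y)

/-- Let `(𝒵, 𝒱)` be an ideal-subcategory decomposition of `𝒰` with `Ob 𝒱 = Ob 𝒰`, let
`𝔞` be a `𝒰`-graded category and `𝔟 = 𝔞^φ` the restriction along `φ : 𝒱 ⊆ 𝒰`, and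
assume the ideal `𝒵` is thin.  Then the extension functor
`(−)|^𝔞 : Bimod_𝒵(𝔟) → Bimod_𝒵(𝔞)` (extending the actions by zero on the morphisms of
`𝒵`) and the restriction functor `(−)|_𝔟 : Bimod_𝒵(𝔞) → Bimod_𝒵(𝔟)` are mutually
inverse isomorphisms of categories `Bimod_𝒵(𝔟) ≅ Bimod_𝒵(𝔞)`. -/
theorem statement18 (𝔞 : GradedCat k 𝒰) (Z : CatIdeal 𝒰) (W : WideSubcat 𝒰)
    (hdec : ∀ {X Y : 𝒰} (f : X ⟶ Y), (W.homs f ∨ Z.mem f) ∧ ¬ (W.homs f ∧ Z.mem f))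
    (hthin : Z.Thin) :
    extendZ (𝔞 := 𝔞) hdec ⋙ restrictZ = 𝟭 (BimodZb k 𝔞 Z W) ∧
    restrictZ ⋙ extendZ (𝔞 := 𝔞) hdec = 𝟭 (BimodZa k 𝔞 Z) :=
  ⟨CategoryTheory.Functor.hext (restrictZ_obj_extendZ_obj hdec) fun N N' _ =>
      BimodZbHom.hext (restrictZ_obj_extendZ_obj hdec N) (restrictZ_obj_extendZ_obj hdec N')
        HEq.rfl,
    CategoryTheory.Functor.hext (extendZ_obj_restrictZ_obj hdec hthin) fun N N' _ =>
      BimodZaHom.hext (extendZ_obj_restrictZ_obj hdec hthin N)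
        (extendZ_obj_restrictZ_obj hdec hthin N') HEq.rfl⟩

end MapGr
end
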